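/- arXiv:2507.06692 — 12 statements merged into one kernel-verified Lean document; each statement's English description precedes it below -/
import Mathlib

section
/- Let a and b be relatively prime positive integers. The number of positive integers that cannot be expressed in the form a·x + b·y with x, y nonnegative integers equals (1/2)·(a-1)·(b-1); i.e., the set NR(a,b) is finite with cardinality (a-1)(b-1)/2. -/
private lemma sylv_decomp (a b : ℤ) (ha : 0 < a) (hab : IsCoprime a b) (n : ℤ) :
    ∃ x y : ℤ, 0 ≤ y ∧ y < a ∧ n = a * x + b * y := by
  obtain ⟨u, v, huv⟩ := hab
  refine ⟨n * u + b * ((n * v) / a), (n * v) % a, Int.emod_nonneg _ ha.ne',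
    Int.emod_lt_of_pos _ ha, ?_⟩
  have hmod : (n * v) % a = n * v - a * ((n * v) / a) := Int.emod_def _ _
  linear_combination -n * huv + (-b) * hmod

private lemma sylv_repr_iff (a b : ℤ) (ha : 0 < a) (hb : 0 < b) (hab : IsCoprime a b)
    (x y : ℤ) (hy0 : 0 ≤ y) (hy : y < a) :
    (∃ x0 y0 : ℕ, a * x + b * y = a * x0 + b * y0) ↔ 0 ≤ x := by
  constructor
  · rintro ⟨x0, y0, h⟩
    have hd : a ∣ (y0 - y) := by
      have hdm : a ∣ b * ((y0 : ℤ) - y) := ⟨x - x0, by linear_combination -h⟩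
      exact hab.dvd_of_dvd_mul_left hdm
    obtain ⟨t, ht⟩ := hd
    rcases le_or_gt 0 t with h0 | h0
    · have hx : x = x0 + b * t := by
        have hcc : a * (x - x0) = a * (b * t) := by linear_combination h + b * ht
        have := mul_left_cancel₀ ha.ne' hcc
        linarith
      have : 0 ≤ b * t := mul_nonneg hb.le h0
      have : (0:ℤ) ≤ (x0:ℤ) := Int.natCast_nonneg x0
      linarith
    · exfalso
      have hyy : (y0 : ℤ) = y + a * t := by linarith
      have : a * t ≤ -a := by
        have : t ≤ -1 := by linarith
        nlinarith
      have h1 : (y0 : ℤ) < 0 := by linarith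
      have := Int.natCast_nonneg y0
      linarith
  · intro hx
    exact ⟨x.toNat, y.toNat, by rw [Int.toNat_of_nonneg hx, Int.toNat_of_nonneg hy0]⟩

private lemma sylv_bridge (a b n : ℕ) :
    (∃ x y : ℕ, n = a * x + b * y) ↔ (∃ x0 y0 : ℕ, (n:ℤ) = a * x0 + b * y0) := by
  constructor
  · rintro ⟨x, y, h⟩; exact ⟨x, y, by exact_mod_cast h⟩
  · rintro ⟨x, y, h⟩; exact ⟨x, y, by exact_mod_cast h⟩

private lemma sylv_coprime (a b : ℕ) (hab : Nat.gcd a b = 1) : IsCoprime (a:ℤ) (b:ℤ) :=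
  Nat.isCoprime_iff_coprime.mpr hab

private lemma sylv_bound (a b : ℕ) (ha : 2 ≤ a) (hb : 2 ≤ b) (hab : Nat.gcd a b = 1)
    (n : ℕ) (h : ¬ ∃ x y : ℕ, n = a * x + b * y) : n ≤ a * b - a - b := by
  have ha' : (0:ℤ) < a := by exact_mod_cast Nat.lt_of_lt_of_le (by norm_num) ha
  have hb' : (0:ℤ) < b := by exact_mod_cast Nat.lt_of_lt_of_le (by norm_num) hb
  obtain ⟨x, y, hy0, hy, hxy⟩ := sylv_decomp a b ha' (sylv_coprime a b hab) n
  have hx : x < 0 := by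
    by_contra hx
    push_neg at hx
    exact h ((sylv_bridge a b n).mpr (by rw [hxy]; exact
      (sylv_repr_iff a b ha' hb' (sylv_coprime a b hab) x y hy0 hy).mpr hx))
  have hx1 : x ≤ -1 := by omega
  have hy1 : y ≤ (a:ℤ) - 1 := by omega
  have hc : (n:ℤ) ≤ (a:ℤ) * b - a - b := by
    nlinarith [mul_le_mul_of_nonneg_left hx1 ha'.le, mul_le_mul_of_nonneg_left hy1 hb'.le]
  have hcast : ((a*b : ℕ):ℤ) = (a:ℤ) * b := by push_cast; ring
  omega

private lemma sylv_key (a b : ℕ) (ha : 2 ≤ a) (hb : 2 ≤ b) (hab : Nat.gcd a b = 1)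
    (n : ℕ) (hn : n ≤ a * b - a - b) :
    (∃ x y : ℕ, n = a * x + b * y) ↔ ¬ (∃ x y : ℕ, (a * b - a - b - n) = a * x + b * y) := by
  have ha' : (0:ℤ) < a := by exact_mod_cast Nat.lt_of_lt_of_le (by norm_num) ha
  have hb' : (0:ℤ) < b := by exact_mod_cast Nat.lt_of_lt_of_le (by norm_num) hb
  have hcop := sylv_coprime a b hab
  have hab' : a + b ≤ a * b := by nlinarith
  obtain ⟨x, y, hy0, hy, hxy⟩ := sylv_decomp a b ha' hcop n
  have h1 : (∃ x y : ℕ, n = a * x + b * y) ↔ 0 ≤ x := by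
    rw [sylv_bridge, hxy]
    exact sylv_repr_iff a b ha' hb' hcop x y hy0 hy
  have hcast : ((a*b : ℕ):ℤ) = (a:ℤ) * b := by push_cast; ring
  have hNn : ((a * b - a - b - n : ℕ) : ℤ) = (a:ℤ) * b - a - b - n := by omega
  have h2 : (∃ x0 y0 : ℕ, ((a * b - a - b - n : ℕ) : ℤ) = a * x0 + b * y0) ↔ 0 ≤ -x - 1 := by
    have heq : ((a * b - a - b - n : ℕ) : ℤ) = (a:ℤ) * (-x - 1) + b * ((a:ℤ) - 1 - y) := by
      rw [hNn]; linarith [hxy]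
    rw [heq]
    exact sylv_repr_iff a b ha' hb' hcop (-x - 1) ((a:ℤ) - 1 - y) (by omega) (by omega)
  rw [h1, sylv_bridge, h2]
  omega

theorem sylvester_count (a b : ℕ) (ha : 0 < a) (hb : 0 < b) (hab : Nat.gcd a b = 1) :
    {n : ℕ | 0 < n ∧ ¬∃ x y : ℕ, n = a * x + b * y}.Finite ∧
    2 * {n : ℕ | 0 < n ∧ ¬∃ x y : ℕ, n = a * x + b * y}.ncard = (a - 1) * (b - 1) := by
  classical
  rcases eq_or_lt_of_le (show 1 ≤ a from ha) with h1 | ha2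
  · have hset : {n : ℕ | 0 < n ∧ ¬∃ x y : ℕ, n = a * x + b * y} = ∅ := by
      ext n
      simp only [Set.mem_setOf_eq, Set.mem_empty_iff_false, iff_false, not_and, not_not]
      exact fun _ => ⟨n, 0, by rw [← h1]; ring⟩
    rw [hset]
    refine ⟨Set.finite_empty, by simp [← h1]⟩
  · rcases eq_or_lt_of_le (show 1 ≤ b from hb) with h1 | hb2
    · have hset : {n : ℕ | 0 < n ∧ ¬∃ x y : ℕ, n = a * x + b * y} = ∅ := by
        ext n
        simp only [Set.mem_setOf_eq, Set.mem_empty_iff_false, iff_false, not_and, not_not]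
        exact fun _ => ⟨0, n, by rw [← h1]; ring⟩
      rw [hset]
      refine ⟨Set.finite_empty, by simp [← h1]⟩
    · -- main case : 2 ≤ a, 2 ≤ b
      have ha2' : 2 ≤ a := ha2
      have hb2' : 2 ≤ b := hb2
      set N := a * b - a - b with hN
      have hP0 : ∃ x y : ℕ, 0 = a * x + b * y := ⟨0, 0, by ring⟩
      have hsetS : {n : ℕ | 0 < n ∧ ¬∃ x y : ℕ, n = a * x + b * y} =
          ↑((Finset.range (N+1)).filter (fun n => ¬ ∃ x y : ℕ, n = a * x + b * y)) := by
        ext n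
        simp only [Set.mem_setOf_eq, Finset.coe_filter, Finset.mem_range]
        constructor
        · rintro ⟨h0, h⟩
          exact ⟨by have := sylv_bound a b ha2' hb2' hab n h; omega, h⟩
        · rintro ⟨h0, h⟩
          refine ⟨?_, h⟩
          rcases Nat.eq_zero_or_pos n with rfl | hpos
          · exact absurd hP0 h
          · exact hpos
      have hcard : ((Finset.range (N+1)).filter (fun n => ¬ ∃ x y : ℕ, n = a * x + b * y)).card
          = ((Finset.range (N+1)).filter (fun n => ∃ x y : ℕ, n = a * x + b * y)).card := by
        apply Finset.card_bij (fun n _ => N - n)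
        · intro n hn
          simp only [Finset.mem_filter, Finset.mem_range] at hn ⊢
          obtain ⟨hn1, hn2⟩ := hn
          refine ⟨by omega, ?_⟩
          have hkey := sylv_key a b ha2' hb2' hab n (by omega)
          rw [← hN] at hkey
          exact Classical.byContradiction fun h => hn2 (hkey.mpr h)
        · intro n hn m hm hnm
          simp only [Finset.mem_filter, Finset.mem_range] at hn hm
          omega
        · intro m hm
          simp only [Finset.mem_filter, Finset.mem_range] at hm ⊢
          obtain ⟨hm1, hm2⟩ := hm
          refine ⟨N - m, ⟨⟨by omega, ?_⟩, by omega⟩⟩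
          have hkey := sylv_key a b ha2' hb2' hab m (by omega)
          rw [← hN] at hkey
          exact hkey.mp hm2
      have hsum := Finset.card_filter_add_card_filter_not
        (s := Finset.range (N+1)) (p := fun n => ∃ x y : ℕ, n = a * x + b * y)
      rw [Finset.card_range] at hsum
      have harith : N + 1 = (a - 1) * (b - 1) := by
        obtain ⟨a', rfl⟩ : ∃ a', a = a' + 2 := ⟨a - 2, by omega⟩
        obtain ⟨b', rfl⟩ : ∃ b', b = b' + 2 := ⟨b - 2, by omega⟩
        have e1 : (a'+2)*(b'+2) = a'*b' + 2*a' + 2*b' + 4 := by ring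
        have e2 : (a'+2-1)*(b'+2-1) = (a'+1)*(b'+1) := by norm_num
        have e3 : (a'+1)*(b'+1) = a'*b' + a' + b' + 1 := by ring
        rw [hN, e1, e2, e3]
        generalize a' * b' = t
        omega
      refine ⟨by rw [hsetS]; exact Finset.finite_toSet _, ?_⟩
      rw [hsetS, Set.ncard_coe_finset]
      omega
end

section
/- Let a and b be relatively prime positive integers and let n be a nonnegative integer. Let a₁ be the remainder of n·a⁻¹ upon division by b (where a⁻¹ is an inverse of a modulo b), and let b₁ be the remainder of n·b⁻¹ upon division by a (where b⁻¹ is an inverse of b modulo a). Then the number N(a,b;n) of pairs (x,y) of nonnegative integers with a·x + b·y = n satisfies N(a,b;n) = 1 + (n - a·a₁ - b·b₁)/(a·b). -/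
theorem binner_count_solutions (a b : ℕ) (ha : 0 < a) (hb : 0 < b)
    (hab : Nat.gcd a b = 1) (n : ℕ)
    (ainv binv : ℕ) (hainv : a * ainv ≡ 1 [MOD b]) (hbinv : b * binv ≡ 1 [MOD a])
    (a₁ b₁ : ℕ) (ha₁ : a₁ = (n * ainv) % b) (hb₁ : b₁ = (n * binv) % a) :
    (({p : ℕ × ℕ | a * p.1 + b * p.2 = n}.ncard : ℚ)) =
      1 + ((n : ℚ) - a * a₁ - b * b₁) / (a * b) := by
  have ha₁lt : a₁ < b := ha₁ ▸ Nat.mod_lt _ hb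
  have hb₁lt : b₁ < a := hb₁ ▸ Nat.mod_lt _ ha
  have h1 : a * a₁ ≡ n [MOD b] := by
    have h0 : a * a₁ ≡ a * (n * ainv) [MOD b] :=
      Nat.ModEq.mul_left a (ha₁ ▸ Nat.mod_modEq _ _)
    calc a * a₁ ≡ a * (n * ainv) [MOD b] := h0
      _ = a * ainv * n := by ring
      _ ≡ 1 * n [MOD b] := hainv.mul_right n
      _ = n := one_mul n
  have h2 : b * b₁ ≡ n [MOD a] := by
    have h0 : b * b₁ ≡ b * (n * binv) [MOD a] :=
      Nat.ModEq.mul_left b (hb₁ ▸ Nat.mod_modEq _ _)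
    calc b * b₁ ≡ b * (n * binv) [MOD a] := h0
      _ = b * binv * n := by ring
      _ ≡ 1 * n [MOD a] := hbinv.mul_right n
      _ = n := one_mul n
  have hmem : ∀ x y : ℕ, a * x + b * y = n → x % b = a₁ ∧ y % a = b₁ := by
    intro x y hxy
    constructor
    · have hx : a * x ≡ a * a₁ [MOD b] := by
        calc a * x ≡ a * x + b * y [MOD b] :=
              ((Nat.modEq_iff_dvd' (Nat.le_add_right _ _)).2 ⟨y, by omega⟩)
          _ = n := hxy
          _ ≡ a * a₁ [MOD b] := h1.symm
      have hc := (hx.cancel_left_of_coprime (Nat.coprime_comm.mp hab)).symm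
      rw [Nat.ModEq] at hc
      rw [Nat.mod_eq_of_lt ha₁lt] at hc
      exact hc.symm
    · have hy : b * y ≡ b * b₁ [MOD a] := by
        calc b * y ≡ a * x + b * y [MOD a] :=
              ((Nat.modEq_iff_dvd' (Nat.le_add_left _ _)).2 ⟨x, by omega⟩)
          _ = n := hxy
          _ ≡ b * b₁ [MOD a] := h2.symm
      have hc := (hy.cancel_left_of_coprime hab).symm
      rw [Nat.ModEq] at hc
      rw [Nat.mod_eq_of_lt hb₁lt] at hc
      exact hc.symm
  -- integer divisibility: a*b ∣ n - a*a₁ - b*b₁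
  have hdvdZ : (a * b : ℤ) ∣ ((n : ℤ) - a * a₁ - b * b₁) := by
    have hbd : (b : ℤ) ∣ ((n : ℤ) - a * a₁ - b * b₁) := by
      have := h1.dvd
      push_cast at this ⊢
      obtain ⟨c, hc⟩ := this
      exact ⟨c - b₁, by linarith⟩
    have had : (a : ℤ) ∣ ((n : ℤ) - a * a₁ - b * b₁) := by
      have := h2.dvd
      push_cast at this ⊢
      obtain ⟨c, hc⟩ := this
      exact ⟨c - a₁, by linarith⟩
    exact (Nat.isCoprime_iff_coprime.mpr hab).mul_dvd had hbd
  have habQ : (a : ℚ) * b ≠ 0 := by positivity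
  by_cases hle : a * a₁ + b * b₁ ≤ n
  · -- k solutions case
    have hdvdN : a * b ∣ n - (a * a₁ + b * b₁) := by
      have : ((a * b : ℕ) : ℤ) ∣ ((n - (a * a₁ + b * b₁) : ℕ) : ℤ) := by
        rw [Nat.cast_sub hle]
        push_cast
        convert hdvdZ using 1
        ring
      exact_mod_cast this
    set k : ℕ := (n - (a * a₁ + b * b₁)) / (a * b) with hk
    have hkn : n = a * a₁ + b * b₁ + a * b * k := by
      have h' : a * b * k = n - (a * a₁ + b * b₁) := by
        rw [hk, Nat.mul_div_cancel' hdvdN]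
      omega
    have hset : {p : ℕ × ℕ | a * p.1 + b * p.2 = n} =
        (fun t => (a₁ + b * t, b₁ + a * (k - t))) '' Set.Iic k := by
      ext ⟨x, y⟩
      simp only [Set.mem_setOf_eq, Set.mem_image, Set.mem_Iic]
      constructor
      · intro hxy
        obtain ⟨hxa, hya⟩ := hmem x y hxy
        have hx : x = a₁ + b * (x / b) := by
          conv_lhs => rw [← Nat.mod_add_div x b, hxa]
        have hy : y = b₁ + a * (y / a) := by
          conv_lhs => rw [← Nat.mod_add_div y a, hya]
        rw [hx, hy, hkn] at hxy
        have h' : a * b * (x / b + y / a) = a * b * k := by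
          zify at hxy ⊢
          linear_combination hxy
        have hqr : x / b + y / a = k := Nat.eq_of_mul_eq_mul_left (Nat.mul_pos ha hb) h'
        refine ⟨x / b, Nat.le.intro hqr, ?_⟩
        have hkq : k - x / b = y / a := by
          rw [← hqr, Nat.add_sub_cancel_left]
        rw [hkq]
        exact Prod.ext hx.symm hy.symm
      · rintro ⟨t, ht, heq⟩
        obtain ⟨u, hu⟩ : ∃ u, k = t + u := ⟨k - t, by omega⟩
        have h1' := congrArg Prod.fst heq
        have h2' := congrArg Prod.snd heq
        simp only at h1' h2'
        rw [← h1', ← h2', hkn, hu, Nat.add_sub_cancel_left]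
        ring
    rw [hset]
    have hinj : Set.InjOn (fun t => (a₁ + b * t, b₁ + a * (k - t))) (Set.Iic k) := by
      intro s hs t ht hst
      have h1' := congrArg Prod.fst hst
      simp only at h1'
      exact Nat.eq_of_mul_eq_mul_left hb (by omega)
    rw [Set.ncard_image_of_injOn hinj]
    have : (Set.Iic k).ncard = k + 1 := by
      rw [← Finset.coe_Iic, Set.ncard_coe_finset, Nat.card_Iic]
    rw [this, hkn]
    push_cast
    field_simp
    ring
  · -- no solutions
    push_neg at hle
    have hsum : a * a₁ + b * b₁ = n + a * b := by
      obtain ⟨m, hm⟩ := hdvdZ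
      have hmlt : (0 : ℤ) < (a * a₁ + b * b₁ : ℤ) - n := Int.sub_pos.mpr (by exact_mod_cast hle)
      have hub : ((a : ℤ) * a₁ + b * b₁ : ℤ) - n < 2 * (a * b) := by
        have han : (1:ℤ) ≤ a := by exact_mod_cast ha
        have hbn : (1:ℤ) ≤ b := by exact_mod_cast hb
        have hnn : (0:ℤ) ≤ n := Int.natCast_nonneg n
        nlinarith [Int.le_sub_one_of_lt (show (a₁:ℤ) < b by exact_mod_cast ha₁lt),
          Int.le_sub_one_of_lt (show (b₁:ℤ) < a by exact_mod_cast hb₁lt)]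
      have habpos : (0:ℤ) < (a:ℤ) * b := by positivity
      have hm1 : m = -1 := by nlinarith
      have : (a * a₁ + b * b₁ : ℤ) = n + a * b := by
        rw [hm1] at hm; linarith
      exact_mod_cast this
    have hempty : {p : ℕ × ℕ | a * p.1 + b * p.2 = n} = ∅ := by
      ext ⟨x, y⟩
      simp only [Set.mem_setOf_eq, Set.mem_empty_iff_false, iff_false]
      intro hxy
      obtain ⟨hxa, hya⟩ := hmem x y hxy
      have hx : a₁ ≤ x := hxa ▸ Nat.mod_le x b
      have hy : b₁ ≤ y := hya ▸ Nat.mod_le y a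
      nlinarith
    rw [hempty, Set.ncard_empty]
    have : ((n : ℚ) - a * a₁ - b * b₁) = -(a * b) := by
      have : ((a * a₁ + b * b₁ : ℕ) : ℚ) = ((n + a * b : ℕ) : ℚ) := by rw [hsum]
      push_cast at this
      linarith
    rw [this]
    field_simp
    norm_num
end

section
/- Let a and b be relatively prime positive integers and m a positive integer. Then the set NRᵐ(a,b) = {nᵐ : n ∈ NR(a,b)} equals the set {(a·a₁ + b·b₁ - a·b)ᵐ · χ(a₁,b₁) : 0 ≤ a₁ ≤ b-1, 0 ≤ b₁ ≤ a-1} with the element 0 removed. -/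
theorem power_set_of_nonrepresentables (a b : ℕ) (ha : 0 < a) (hb : 0 < b)
    (hab : Nat.gcd a b = 1) (m : ℕ) (hm : 0 < m) :
    {z : ℤ | ∃ n : ℕ, (0 < n ∧ ¬∃ x y : ℕ, n = a * x + b * y) ∧ z = (n : ℤ) ^ m} =
      {z : ℤ | ∃ a₁ b₁ : ℤ, 0 ≤ a₁ ∧ a₁ ≤ (b : ℤ) - 1 ∧ 0 ≤ b₁ ∧ b₁ ≤ (a : ℤ) - 1 ∧
          z = ((a : ℤ) * a₁ + (b : ℤ) * b₁ - (a : ℤ) * b) ^ m *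
            (if 0 < (a : ℤ) * a₁ + (b : ℤ) * b₁ - (a : ℤ) * b then 1 else 0)} \ {0} := by
  have hA : (1 : ℤ) ≤ a := by exact_mod_cast ha
  have hB : (1 : ℤ) ≤ b := by exact_mod_cast hb
  have hco : IsCoprime (a : ℤ) (b : ℤ) := by
    rw [Int.isCoprime_iff_gcd_eq_one]; exact_mod_cast hab
  ext z
  simp only [Set.mem_setOf_eq, Set.mem_diff, Set.mem_singleton_iff]
  constructor
  · rintro ⟨n, ⟨hn, hrep⟩, rfl⟩
    obtain ⟨u, v, huv⟩ := hco
    set a₁ : ℤ := ((n : ℤ) * u) % b with ha₁def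
    have ha₁0 : 0 ≤ a₁ := Int.emod_nonneg _ (by positivity)
    have ha₁b : a₁ < b := Int.emod_lt_of_pos _ (by exact_mod_cast hb)
    have hdvd : (b : ℤ) ∣ (n : ℤ) - a * a₁ := by
      have := Int.emod_emod_of_dvd ((n:ℤ) * u) (dvd_refl (b:ℤ))
      have h1 : (b : ℤ) ∣ ((n:ℤ) * u - a₁) := Int.dvd_self_sub_of_emod_eq rfl
      obtain ⟨q, hq⟩ := h1
      have : (n : ℤ) - a * a₁ = n * (v * b) + a * (b * q) := by
        have : a₁ = (n:ℤ) * u - b * q := by linarith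
        rw [this]; nlinarith [huv]
      rw [this]; exact dvd_add ⟨n * v, by ring⟩ ⟨a * q, by ring⟩
    obtain ⟨k, hk⟩ := hdvd
    set b₁ : ℤ := k + a with hb₁def
    have hval : (a : ℤ) * a₁ + b * b₁ - a * b = n := by
      rw [hb₁def]; linarith [hk]
    have hb₁0 : 0 ≤ b₁ := by
      by_contra h
      push_neg at h
      have h1 : (a:ℤ) * a₁ ≤ a * (b - 1) := by
        apply mul_le_mul_of_nonneg_left (by linarith) (by linarith)
      have h2 : (b:ℤ) * b₁ ≤ b * (-1) := by
        apply mul_le_mul_of_nonneg_left (by omega) (by linarith)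
      have : (0:ℤ) < n := by exact_mod_cast hn
      nlinarith
    have hb₁a : b₁ ≤ a - 1 := by
      by_contra h
      push_neg at h
      have hk0 : 0 ≤ k := by omega
      apply hrep
      refine ⟨a₁.toNat, k.toNat, ?_⟩
      have : (n : ℤ) = a * a₁.toNat + b * k.toNat := by
        rw [Int.toNat_of_nonneg ha₁0, Int.toNat_of_nonneg hk0]; linarith [hk]
      exact_mod_cast this
    have hpos : 0 < (a : ℤ) * a₁ + b * b₁ - a * b := by
      rw [hval]; exact_mod_cast hn
    refine ⟨⟨a₁, b₁, ha₁0, by linarith, hb₁0, hb₁a, ?_⟩, ?_⟩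
    · rw [if_pos hpos, mul_one, hval]
    · positivity
  · rintro ⟨⟨a₁, b₁, ha₁0, ha₁b, hb₁0, hb₁a, rfl⟩, hz0⟩
    set c : ℤ := (a : ℤ) * a₁ + b * b₁ - a * b with hcdef
    have hpos : 0 < c := by
      by_contra h
      rw [if_neg h, mul_zero] at hz0
      exact hz0 rfl
    rw [if_pos hpos, mul_one]
    refine ⟨c.toNat, ⟨by omega, ?_⟩, by rw [Int.toNat_of_nonneg hpos.le]⟩
    rintro ⟨x, y, hxy⟩
    have hxy' : c = (a : ℤ) * x + b * y := by
      rw [← Int.toNat_of_nonneg hpos.le]; exact_mod_cast hxy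
    have hd : (b : ℤ) ∣ a * (a₁ - x) := ⟨y - b₁ + a, by linarith [hxy']⟩
    have hd2 : (b : ℤ) ∣ (a₁ - x) := (hco.symm.dvd_of_dvd_mul_left hd)
    obtain ⟨t, ht⟩ := hd2
    have ht0 : t ≤ 0 := by
      by_contra h
      push_neg at h
      have : (b : ℤ) * 1 ≤ b * t := mul_le_mul_of_nonneg_left (by omega) (by linarith)
      have hx0 : (0:ℤ) ≤ x := Int.natCast_nonneg x
      linarith
    have hy : (y : ℤ) = a * (t - 1) + b₁ := by
      have hb0 : (b : ℤ) ≠ 0 := by positivity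
      have : (b:ℤ) * ((y:ℤ) - (a * (t-1) + b₁)) = 0 := by
        nlinarith [hxy', ht]
      have := mul_eq_zero.mp this
      rcases this with h | h
      · exact absurd h hb0
      · linarith
    have hy0 : (0:ℤ) ≤ y := Int.natCast_nonneg y
    have : (a:ℤ) * (t - 1) ≤ a * (-1) := mul_le_mul_of_nonneg_left (by omega) (by linarith)
    linarith
end

section
/- Let a and b be relatively prime positive integers and m a nonnegative integer. Then the m-th power sum of the nonrepresentable numbers satisfies S_m(a,b) = Σ_{0 ≤ a₁ ≤ b-1} Σ_{0 ≤ b₁ ≤ a-1} (a·a₁ + b·b₁ - a·b)ᵐ · χ(a₁,b₁), where (with the convention 0⁰ = 1 for m = 0) the sum ranges over the full grid. -/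
theorem sylvester_sum_as_grid_sum (a b : ℕ) (ha : 0 < a) (hb : 0 < b)
    (hab : Nat.gcd a b = 1) (m : ℕ) :
    (∑ᶠ n ∈ {n : ℕ | 0 < n ∧ ¬∃ x y : ℕ, n = a * x + b * y}, (n : ℤ) ^ m) =
      ∑ a₁ ∈ Finset.range b, ∑ b₁ ∈ Finset.range a,
        ((a : ℤ) * a₁ + (b : ℤ) * b₁ - (a : ℤ) * b) ^ m *
          (if 0 < (a : ℤ) * a₁ + (b : ℤ) * b₁ - (a : ℤ) * b then 1 else 0) := by
  classical
  haveI : NeZero b := ⟨hb.ne'⟩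
  set f : ℕ × ℕ → ℤ := fun p => (a : ℤ) * p.1 + (b : ℤ) * p.2 - (a : ℤ) * b with hf
  set T : Finset (ℕ × ℕ) :=
    (Finset.range b ×ˢ Finset.range a).filter (fun p => 0 < f p) with hT
  set g : ℕ × ℕ → ℕ := fun p => a * p.1 + b * p.2 - a * b with hg
  have hbZ : (0:ℤ) < (b:ℤ) := by exact_mod_cast hb
  have hcop : IsCoprime (b : ℤ) (a : ℤ) := by
    rw [Int.isCoprime_iff_gcd_eq_one]
    simpa [Int.gcd, Nat.gcd_comm] using hab
  -- on T, casts agree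
  have hgf : ∀ p ∈ T, (g p : ℤ) = f p := by
    intro p hp
    simp only [hT, Finset.mem_filter] at hp
    have h1 : (0:ℤ) < (a : ℤ) * p.1 + (b : ℤ) * p.2 - (a : ℤ) * b := hp.2
    show ((a * p.1 + b * p.2 - a * b : ℕ) : ℤ) = (a : ℤ) * p.1 + (b : ℤ) * p.2 - (a : ℤ) * b
    omega
  -- injectivity of g on T
  have hinj : Set.InjOn g T := by
    intro p hp q hq hpq
    rw [Finset.mem_coe] at hp hq
    have hfp : (g p : ℤ) = f p := hgf p hp
    have hfq : (g q : ℤ) = f q := hgf q hq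
    have hE0 : f p = f q := by
      rw [← hfp, ← hfq]; exact_mod_cast hpq
    have hE : (a : ℤ) * p.1 + (b : ℤ) * p.2 - (a : ℤ) * b
        = (a : ℤ) * q.1 + (b : ℤ) * q.2 - (a : ℤ) * b := hE0
    simp only [hT, Finset.mem_filter, Finset.mem_product, Finset.mem_range] at hp hq
    have hb1 : (p.1 : ℤ) < b := by exact_mod_cast hp.1.1
    have hq1 : (q.1 : ℤ) < b := by exact_mod_cast hq.1.1
    have hdvd : (b : ℤ) ∣ ((p.1 : ℤ) - q.1) := by
      refine hcop.dvd_of_dvd_mul_left ⟨(q.2 : ℤ) - p.2, ?_⟩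
      linear_combination hE
    have h0 : (p.1 : ℤ) - q.1 = 0 := by
      refine Int.eq_zero_of_abs_lt_dvd hdvd ?_
      rw [abs_lt]
      constructor
      · linarith [Int.natCast_nonneg p.1]
      · linarith [Int.natCast_nonneg q.1]
    have h1 : p.1 = q.1 := by exact_mod_cast sub_eq_zero.mp h0
    have h2 : p.2 = q.2 := by
      have h3 : (b : ℤ) * p.2 = (b : ℤ) * q.2 := by
        have : (p.1 : ℤ) = q.1 := by exact_mod_cast h1
        linear_combination hE + (a : ℤ) * this.symm
      exact_mod_cast mul_left_cancel₀ hbZ.ne' h3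
    exact Prod.ext h1 h2
  -- set equality
  have hset : {n : ℕ | 0 < n ∧ ¬∃ x y : ℕ, n = a * x + b * y} = ↑(T.image g) := by
    ext n
    simp only [Set.mem_setOf_eq, Finset.coe_image, Set.mem_image, Finset.mem_coe]
    constructor
    · rintro ⟨hn, hnr⟩
      have hu : IsUnit (a : ZMod b) := (ZMod.isUnit_iff_coprime a b).mpr hab
      obtain ⟨a₁, ha₁lt, hmod⟩ :
          ∃ a₁ : ℕ, a₁ < b ∧ ((a * a₁ : ℕ) : ZMod b) = (n : ZMod b) := by
        refine ⟨(((a : ZMod b))⁻¹ * (n : ZMod b)).val, ZMod.val_lt _, ?_⟩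
        push_cast
        rw [ZMod.natCast_val, ZMod.cast_id, ← mul_assoc, ZMod.mul_inv_of_unit _ hu, one_mul]
      have hdvd : (b : ℤ) ∣ (n : ℤ) - (a : ℤ) * a₁ := by
        have h := (ZMod.natCast_eq_natCast_iff _ _ _).mp hmod
        have h2 := Nat.ModEq.dvd h
        obtain ⟨t, ht2⟩ := h2
        refine ⟨t, ?_⟩
        push_cast at ht2
        linarith
      obtain ⟨t, ht⟩ := hdvd
      -- t < 0 since n is not representable
      have htneg : t < 0 := by
        by_contra h
        push_neg at h
        apply hnr
        refine ⟨a₁, t.toNat, ?_⟩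
        have hz : (n : ℤ) = (a : ℤ) * a₁ + (b : ℤ) * t.toNat := by
          rw [Int.toNat_of_nonneg h]; linarith
        exact_mod_cast hz
      -- t > -a
      have htgt : -(a : ℤ) < t := by
        have hbnd : (b : ℤ) * (-(a:ℤ)) < (b : ℤ) * t := by
          have h1 : (a : ℤ) * a₁ ≤ (a : ℤ) * (b - 1) := by
            have h2 : (a₁ : ℤ) ≤ (b : ℤ) - 1 := by
              have : (a₁ : ℤ) < b := by exact_mod_cast ha₁lt
              linarith
            exact mul_le_mul_of_nonneg_left h2 (by positivity)
          have hn1 : (1 : ℤ) ≤ n := by exact_mod_cast hn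
          nlinarith [Int.natCast_pos.mpr ha]
        exact lt_of_mul_lt_mul_left hbnd hbZ.le
      refine ⟨(a₁, (t + a).toNat), ?_, ?_⟩
      · have hb₁eq : (((t + a).toNat : ℕ) : ℤ) = t + a := Int.toNat_of_nonneg (by linarith)
        have hb₁lt : (t + a).toNat < a := by
          have : (((t + a).toNat : ℕ) : ℤ) < a := by rw [hb₁eq]; linarith
          exact_mod_cast this
        simp only [hT, Finset.mem_filter, Finset.mem_product, Finset.mem_range]
        refine ⟨⟨ha₁lt, hb₁lt⟩, ?_⟩
        show (0:ℤ) < (a : ℤ) * a₁ + (b : ℤ) * ((t + a).toNat : ℕ) - (a : ℤ) * b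
        rw [hb₁eq]
        have hn1 : (0 : ℤ) < n := by exact_mod_cast hn
        nlinarith [ht]
      · show a * a₁ + b * (t + a).toNat - a * b = n
        have hb₁eq : (((t + a).toNat : ℕ) : ℤ) = t + a := Int.toNat_of_nonneg (by linarith)
        have hnat : a * a₁ + b * (t + a).toNat = n + a * b := by
          have hz : ((a * a₁ + b * (t + a).toNat : ℕ) : ℤ) = ((n + a * b : ℕ) : ℤ) := by
            push_cast
            rw [hb₁eq]
            linarith
          exact_mod_cast hz
        omega
    · rintro ⟨p, hp, rfl⟩
      have hfp := hgf p hp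
      simp only [hT, Finset.mem_filter, Finset.mem_product, Finset.mem_range] at hp
      have hpos : (0:ℤ) < (a : ℤ) * p.1 + (b : ℤ) * p.2 - (a : ℤ) * b := hp.2
      constructor
      · have h0 : (0:ℤ) < (g p : ℤ) := by rw [hfp]; exact hp.2
        exact_mod_cast h0
      · rintro ⟨x, y, hxy⟩
        have hE0 : f p = (a : ℤ) * x + (b : ℤ) * y := by
          rw [← hfp]; exact_mod_cast hxy
        have hE : (a : ℤ) * p.1 + (b : ℤ) * p.2 - (a : ℤ) * b
            = (a : ℤ) * x + (b : ℤ) * y := hE0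
        have hdvd : (b : ℤ) ∣ ((p.1 : ℤ) - x) := by
          refine hcop.dvd_of_dvd_mul_left ⟨(y : ℤ) + a - p.2, ?_⟩
          linear_combination hE
        obtain ⟨k, hk⟩ := hdvd
        have h2 : (b:ℤ) * ((y:ℤ) + a - p.2) = (b:ℤ) * ((a:ℤ) * k) := by
          linear_combination (-1 : ℤ) * hE + (a : ℤ) * hk
        have hak : (y : ℤ) + a - p.2 = (a : ℤ) * k := mul_left_cancel₀ hbZ.ne' h2
        have hk1 : 1 ≤ k := by
          by_contra h
          push_neg at h
          have hk0 : k ≤ 0 := by omega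
          have hne : (a : ℤ) * k ≤ 0 :=
            mul_nonpos_of_nonneg_of_nonpos (by positivity) hk0
          have hy : (0:ℤ) ≤ y := Int.natCast_nonneg y
          have hp2 : (p.2 : ℤ) < a := by exact_mod_cast hp.1.2
          have hapos : (0:ℤ) < a := by exact_mod_cast ha
          linarith
        have hx : (0:ℤ) ≤ x := Int.natCast_nonneg x
        have hp1 : (p.1 : ℤ) < b := by exact_mod_cast hp.1.1
        have hbk : (b : ℤ) * 1 ≤ (b : ℤ) * k :=
          mul_le_mul_of_nonneg_left (by exact_mod_cast hk1) hbZ.le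
        linarith
  -- now compute
  rw [hset, finsum_mem_coe_finset, Finset.sum_image (fun p hp q hq => hinj hp hq)]
  have hL : ∑ p ∈ T, ((g p : ℤ)) ^ m = ∑ p ∈ T, (f p) ^ m :=
    Finset.sum_congr rfl (fun p hp => by rw [hgf p hp])
  rw [hL]
  rw [← Finset.sum_product']
  have hR : ∀ p ∈ Finset.range b ×ˢ Finset.range a,
      ((a : ℤ) * p.1 + (b : ℤ) * p.2 - (a : ℤ) * b) ^ m *
        (if 0 < (a : ℤ) * p.1 + (b : ℤ) * p.2 - (a : ℤ) * b then 1 else 0) =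
      (if 0 < f p then (f p) ^ m else 0) := by
    intro p _
    simp only [hf, mul_ite, mul_one, mul_zero]
  rw [Finset.sum_congr rfl hR, ← Finset.sum_filter]
end

section
/- Let a and b be relatively prime positive integers and n a nonnegative integer. Then Σ_{0 ≤ a₁ ≤ b-1} Σ_{0 ≤ b₁ ≤ a-1} (a·a₁ + b·b₁)ⁿ · χ(a₁,b₁) = Σ_{i=0}^{n} C(n,i) · aⁱ · bⁱ · S_{n-i}(a,b). -/
-- Lemma A: grid points with a*b < a*a₁+b*b₁ give nonrepresentable numbers
lemma lemA (a b : ℕ) (hab : Nat.gcd a b = 1) (ha : 0 < a) (hb : 0 < b)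
    (a₁ b₁ : ℕ) (h1 : a₁ < b) (h2 : b₁ < a) (h3 : a*b < a*a₁+b*b₁) :
    ¬∃ x y : ℕ, a*a₁+b*b₁ - a*b = a*x + b*y := by
  rintro ⟨x, y, hxy⟩
  have he : a*a₁+b*b₁ = a*x+b*y+a*b := by omega
  have h4 : (a * a₁) % b = (a * x) % b := by
    have hee : a*a₁ + b*b₁ = a*x + b*(y+a) := by rw [he]; ring
    calc (a*a₁) % b = (a*a₁ + b*b₁) % b := (Nat.add_mul_mod_self_left _ _ _).symm
      _ = (a*x + b*(y+a)) % b := by rw [hee]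
      _ = (a*x) % b := Nat.add_mul_mod_self_left _ _ _
  have h5 : a₁ ≡ x [MOD b] := Nat.ModEq.cancel_left_of_coprime (by rwa [Nat.gcd_comm] at hab) h4
  have h6 : x % b = a₁ := by
    have := h5.symm
    unfold Nat.ModEq at this
    rwa [Nat.mod_eq_of_lt h1] at this
  have hx : x = b * (x / b) + a₁ := by rw [← h6]; exact (Nat.div_add_mod x b).symm
  set q := x / b with hq
  have he2 : b*b₁ = b*(a*q + y + a) := by nlinarith [he, hx]
  have : b₁ = a*q + y + a := Nat.eq_of_mul_eq_mul_left hb he2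
  omega

-- Lemma B: every positive nonrepresentable comes from a grid point
lemma lemB (a b : ℕ) (hab : Nat.gcd a b = 1) (ha : 0 < a) (hb : 0 < b)
    (k : ℕ) (hk : 0 < k) (hnr : ¬∃ x y : ℕ, k = a*x+b*y) :
    ∃ a₁ b₁ : ℕ, a₁ < b ∧ b₁ < a ∧ a*a₁ + b*b₁ = k + a*b := by
  have hbz : (1:ℤ) = a * Nat.gcdA a b + b * Nat.gcdB a b := by
    have := Nat.gcd_eq_gcd_ab a b
    rw [hab] at this
    exact_mod_cast this
  set u : ℤ := (k:ℤ) * Nat.gcdA a b with hu_def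
  have hk' : (k:ℤ) = a * u + b * ((k:ℤ) * Nat.gcdB a b) := by
    rw [hu_def]; linear_combination (k:ℤ) * hbz
  set r : ℤ := u % b with hr_def
  set q : ℤ := u / b with hq_def
  have hbne : (b:ℤ) ≠ 0 := by exact_mod_cast hb.ne'
  have hbpos : (0:ℤ) < b := by exact_mod_cast hb
  have hapos : (0:ℤ) < a := by exact_mod_cast ha
  have hr0 : 0 ≤ r := Int.emod_nonneg u hbne
  have hrb : r < b := Int.emod_lt_of_pos u hbpos
  have hu : u = b*q + r := by rw [hq_def, hr_def]; exact (Int.mul_ediv_add_emod u b).symm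
  set t : ℤ := a*q + (k:ℤ)*Nat.gcdB a b with ht_def
  have hkt : (k:ℤ) = a*r + b*t := by rw [ht_def]; rw [hu] at hk'; linarith [hk']
  have ht : t < 0 := by
    by_contra h
    push_neg at h
    apply hnr
    refine ⟨r.toNat, t.toNat, ?_⟩
    have hcast : (k:ℤ) = a * (r.toNat:ℤ) + b * (t.toNat:ℤ) := by
      rw [Int.toNat_of_nonneg hr0, Int.toNat_of_nonneg h]; exact hkt
    exact_mod_cast hcast
  have hkz : (0:ℤ) < k := by exact_mod_cast hk
  have har : a*r < a*b := by nlinarith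
  have htlow : -(a:ℤ) < t := by nlinarith
  have ht0 : 0 ≤ t + a := by linarith
  refine ⟨r.toNat, (t+a).toNat, ?_, ?_, ?_⟩
  · have : (r.toNat : ℤ) < b := by rwa [Int.toNat_of_nonneg hr0]
    exact_mod_cast this
  · have : ((t+a).toNat : ℤ) < a := by rw [Int.toNat_of_nonneg ht0]; linarith
    exact_mod_cast this
  · have : (a:ℤ) * r.toNat + b * (t+a).toNat = k + a*b := by
      rw [Int.toNat_of_nonneg hr0, Int.toNat_of_nonneg ht0]; linarith [hkt]
    exact_mod_cast this

-- Lemma C: injectivity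
lemma lemC (a b : ℕ) (hab : Nat.gcd a b = 1) (ha : 0 < a) (hb : 0 < b)
    (a₁ b₁ a₁' b₁' : ℕ) (h1 : a₁ < b) (h1' : a₁' < b)
    (he : a*a₁ + b*b₁ = a*a₁' + b*b₁') : a₁ = a₁' ∧ b₁ = b₁' := by
  have h4 : (a * a₁) % b = (a * a₁') % b := by
    calc (a*a₁) % b = (a*a₁ + b*b₁) % b := (Nat.add_mul_mod_self_left _ _ _).symm
      _ = (a*a₁' + b*b₁') % b := by rw [he]
      _ = (a*a₁') % b := Nat.add_mul_mod_self_left _ _ _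
  have h5 : a₁ ≡ a₁' [MOD b] := Nat.ModEq.cancel_left_of_coprime (by rwa [Nat.gcd_comm] at hab) h4
  have h6 : a₁ = a₁' := by
    unfold Nat.ModEq at h5
    rwa [Nat.mod_eq_of_lt h1, Nat.mod_eq_of_lt h1'] at h5
  subst h6
  refine ⟨rfl, ?_⟩
  have : b*b₁ = b*b₁' := by omega
  exact Nat.eq_of_mul_eq_mul_left hb this

theorem grid_power_sum_identity (a b : ℕ) (ha : 0 < a) (hb : 0 < b)
    (hab : Nat.gcd a b = 1) (n : ℕ) :
    (∑ a₁ ∈ Finset.range b, ∑ b₁ ∈ Finset.range a,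
        ((a : ℤ) * a₁ + (b : ℤ) * b₁) ^ n *
          (if 0 < (a : ℤ) * a₁ + (b : ℤ) * b₁ - (a : ℤ) * b then 1 else 0)) =
      ∑ i ∈ Finset.range (n + 1), (n.choose i : ℤ) * (a : ℤ) ^ i * (b : ℤ) ^ i *
        (∑ᶠ k ∈ {k : ℕ | 0 < k ∧ ¬∃ x y : ℕ, k = a * x + b * y}, (k : ℤ) ^ (n - i)) := by
  classical
  set N : Finset ℕ := (Finset.range (a*b)).filter
      (fun k => 0 < k ∧ ¬∃ x y : ℕ, k = a*x+b*y) with hN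
  have hset : {k : ℕ | 0 < k ∧ ¬∃ x y : ℕ, k = a * x + b * y} = ↑N := by
    ext k
    simp only [hN, Finset.coe_filter, Finset.mem_range, Set.mem_setOf_eq]
    constructor
    · rintro ⟨hk, hnr⟩
      refine ⟨?_, hk, hnr⟩
      obtain ⟨a₁, b₁, h1, h2, h3⟩ := lemB a b hab ha hb k hk hnr
      have e1 : a*(a₁+1) ≤ a*b := Nat.mul_le_mul_left a h1
      have e2 : b*(b₁+1) ≤ b*a := Nat.mul_le_mul_left b h2
      nlinarith
    · tauto
  simp_rw [hset, finsum_mem_coe_finset]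
  rw [← Finset.sum_product']
  simp_rw [mul_ite, mul_one, mul_zero]
  rw [← Finset.sum_filter]
  set T := (Finset.range b ×ˢ Finset.range a).filter
      (fun p => 0 < (a:ℤ)*p.1 + (b:ℤ)*p.2 - (a:ℤ)*b) with hT
  have memT : ∀ p : ℕ × ℕ, p ∈ T → p.1 < b ∧ p.2 < a ∧ a*b < a*p.1 + b*p.2 := by
    intro p hp
    simp only [hT, Finset.mem_filter, Finset.mem_product, Finset.mem_range] at hp
    obtain ⟨⟨hp1, hp2⟩, hp3⟩ := hp
    refine ⟨hp1, hp2, ?_⟩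
    have : (a:ℤ)*b < (a:ℤ)*p.1 + (b:ℤ)*p.2 := by linarith
    exact_mod_cast this
  have key : ∑ p ∈ T, ((a:ℤ)*p.1 + (b:ℤ)*p.2)^n = ∑ k ∈ N, ((k:ℤ) + (a:ℤ)*b)^n := by
    apply Finset.sum_bij (fun p _ => a*p.1 + b*p.2 - a*b)
    · intro p hp
      obtain ⟨hp1, hp2, h3⟩ := memT p hp
      have e1 : a*(p.1+1) ≤ a*b := Nat.mul_le_mul_left a hp1
      have e2 : b*(p.2+1) ≤ b*a := Nat.mul_le_mul_left b hp2
      simp only [hN, Finset.mem_filter, Finset.mem_range]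
      have hsub : a*p.1+b*p.2 - a*b + a*b = a*p.1+b*p.2 := Nat.sub_add_cancel h3.le
      exact ⟨by nlinarith [hsub],
        Nat.sub_pos_of_lt h3, lemA a b hab ha hb p.1 p.2 hp1 hp2 h3⟩
    · intro p hp p' hp' heq
      obtain ⟨hp1, hp2, h3⟩ := memT p hp
      obtain ⟨hp1', hp2', h3'⟩ := memT p' hp'
      have e : a*p.1+b*p.2 = a*p'.1+b*p'.2 := by
        calc a*p.1+b*p.2 = (a*p.1+b*p.2 - a*b) + a*b := (Nat.sub_add_cancel h3.le).symm
          _ = (a*p'.1+b*p'.2 - a*b) + a*b := by rw [heq]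
          _ = a*p'.1+b*p'.2 := Nat.sub_add_cancel h3'.le
      have := lemC a b hab ha hb p.1 p.2 p'.1 p'.2 hp1 hp1' e
      exact Prod.ext this.1 this.2
    · intro k hk
      simp only [hN, Finset.mem_filter, Finset.mem_range] at hk
      obtain ⟨hklt, hk0, hnr⟩ := hk
      obtain ⟨a₁, b₁, h1, h2, h3⟩ := lemB a b hab ha hb k hk0 hnr
      refine ⟨(a₁, b₁), ?_, Nat.sub_eq_of_eq_add h3⟩
      simp only [hT, Finset.mem_filter, Finset.mem_product, Finset.mem_range]
      refine ⟨⟨h1, h2⟩, ?_⟩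
      have hc : (a:ℤ)*a₁ + (b:ℤ)*b₁ = (k:ℤ) + (a:ℤ)*b := by exact_mod_cast h3
      have hk0' : (0:ℤ) < k := by exact_mod_cast hk0
      show (0:ℤ) < (a:ℤ)*a₁ + (b:ℤ)*b₁ - (a:ℤ)*b
      linarith
    · intro p hp
      obtain ⟨hp1, hp2, h3⟩ := memT p hp
      have hcast : ((a*p.1 + b*p.2 - a*b : ℕ) : ℤ) = (a:ℤ)*p.1 + (b:ℤ)*p.2 - (a:ℤ)*b := by
        rw [Nat.cast_sub h3.le]; push_cast; ring
      rw [hcast]; ring_nf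
  rw [key]
  have expand : ∀ k : ℕ, ((k:ℤ) + (a:ℤ)*b)^n
      = ∑ i ∈ Finset.range (n+1), ((a:ℤ)*b)^i * (k:ℤ)^(n-i) * (n.choose i : ℤ) := by
    intro k; rw [add_comm]; exact add_pow _ _ n
  simp_rw [expand]
  rw [Finset.sum_comm]
  refine Finset.sum_congr rfl ?_
  intro i _
  rw [Finset.mul_sum]
  refine Finset.sum_congr rfl ?_
  intro k _
  ring
end

section
/- Let a and b be relatively prime positive integers and m ≥ 1 an integer. Then m·a·b·S_{m-1}(a,b) = Σ_{0 ≤ a₁ ≤ b-1} Σ_{0 ≤ b₁ ≤ a-1} (a·a₁ + b·b₁)ᵐ − m·a·b · Σ_{j=1}^{m-1} C(m-1,j)·aʲ·bʲ·S_{m-1-j}(a,b) + Σ_{i=2}^{m} (-1)ⁱ · C(m,i) · aⁱ·bⁱ · Σ_{j=0}^{m-i} C(m-i,j)·aʲ·bʲ·S_{m-i-j}(a,b) − (1/(m+1)) · Σ_{j=0}^{m} C(m+1,j) · B_j · (a·b−1)^{m+1−j}, where B_j are the Bernoulli numbers with B₁ = 1/2. -/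
open Finset

/-- Injectivity of Apéry pairs modulo `a*b`. -/
lemma sylv_pair_inj (a b : ℕ) (ha : 0 < a) (hb : 0 < b) (hab : Nat.gcd a b = 1)
    {a₁ b₁ a₂ b₂ : ℕ} (h1 : a₁ < b) (h3 : b₁ < a) (h2 : a₂ < b) (h4 : b₂ < a)
    (h : (a * a₁ + b * b₁) % (a * b) = (a * a₂ + b * b₂) % (a * b)) :
    a₁ = a₂ ∧ b₁ = b₂ := by
  have hcop : IsCoprime (a : ℤ) (b : ℤ) := by
    rw [Nat.isCoprime_iff_coprime]; exact hab
  have h' : ((a * a₁ + b * b₁ : ℕ) : ℤ) % ((a * b : ℕ) : ℤ)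
      = ((a * a₂ + b * b₂ : ℕ) : ℤ) % ((a * b : ℕ) : ℤ) := by
    exact_mod_cast h
  have hd : ((a : ℤ) * b) ∣ ((a : ℤ) * a₁ + b * b₁) - ((a : ℤ) * a₂ + b * b₂) := by
    have := Int.ModEq.dvd (h'.symm : Int.ModEq _ _ _)
    push_cast at this
    exact this
  obtain ⟨k, hk⟩ := hd
  have hda : (a : ℤ) ∣ (b : ℤ) * ((b₁ : ℤ) - b₂) :=
    ⟨b * k - (a₁ : ℤ) + a₂, by linear_combination hk⟩
  have hb12 : (b₁ : ℤ) - b₂ = 0 := by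
    refine Int.eq_zero_of_abs_lt_dvd (hcop.dvd_of_dvd_mul_left hda) ?_
    rw [abs_lt]
    constructor <;> push_cast <;> omega
  have hbb : b₁ = b₂ := by omega
  subst hbb
  have hdb : ((a : ℤ) * b) ∣ (a : ℤ) * ((a₁ : ℤ) - a₂) := ⟨k, by linear_combination hk⟩
  have hdb' : (b : ℤ) ∣ ((a₁ : ℤ) - a₂) := by
    rcases hdb with ⟨k', hk'⟩
    refine ⟨k', ?_⟩
    have ha' : (a : ℤ) ≠ 0 := by positivity
    linarith [mul_left_cancel₀ ha' (by linear_combination hk' : (a:ℤ) * ((a₁:ℤ) - a₂) = a * (b * k'))]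
  have ha12 : (a₁ : ℤ) - a₂ = 0 := by
    refine Int.eq_zero_of_abs_lt_dvd hdb' ?_
    rw [abs_lt]
    constructor <;> push_cast <;> omega
  omega

/-- Any representable number decomposes as an Apéry element plus a multiple of `a*b`. -/
lemma sylv_rep_decomp (a b : ℕ) (ha : 0 < a) (hb : 0 < b) (x y : ℕ) :
    ∃ a₁ b₁ t : ℕ, a₁ < b ∧ b₁ < a ∧ a * x + b * y = a * a₁ + b * b₁ + t * (a * b) := by
  refine ⟨x % b, (y + a * (x / b)) % a, (y + a * (x / b)) / a,
    Nat.mod_lt _ hb, Nat.mod_lt _ ha, ?_⟩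
  have h1 : b * (x / b) + x % b = x := Nat.div_add_mod x b
  have h2 : a * ((y + a * (x / b)) / a) + (y + a * (x / b)) % a = y + a * (x / b) :=
    Nat.div_add_mod _ a
  calc a * x + b * y = a * (b * (x / b) + x % b) + b * y := by rw [h1]
    _ = a * (x % b) + b * (y + a * (x / b)) := by ring
    _ = a * (x % b) + b * (a * ((y + a * (x / b)) / a) + (y + a * (x / b)) % a) := by rw [h2]
    _ = a * (x % b) + b * ((y + a * (x / b)) % a) + ((y + a * (x / b)) / a) * (a * b) := by ring

/-- The finset of positive non-representable numbers. -/
def sylvNR (a b : ℕ) : Finset ℕ :=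
  (Finset.range b ×ˢ Finset.range a).biUnion fun p =>
    (Finset.range ((a * p.1 + b * p.2) / (a * b))).image
      fun t => (a * p.1 + b * p.2) % (a * b) + t * (a * b)

lemma sylv_mem_NR (a b : ℕ) (ha : 0 < a) (hb : 0 < b) (hab : Nat.gcd a b = 1) (n : ℕ) :
    n ∈ sylvNR a b ↔ (0 < n ∧ ¬∃ x y : ℕ, n = a * x + b * y) := by
  have hc : 0 < a * b := Nat.mul_pos ha hb
  simp only [sylvNR, Finset.mem_biUnion, Finset.mem_image, Finset.mem_range,
    Finset.mem_product]
  constructor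
  · rintro ⟨p, ⟨hp1, hp2⟩, t, ht, rfl⟩
    set w := a * p.1 + b * p.2 with hw
    have hn_mod : (w % (a * b) + t * (a * b)) % (a * b) = w % (a * b) := by
      rw [Nat.add_mul_mod_self_right, Nat.mod_mod_of_dvd _ dvd_rfl]
    have hlt : w % (a * b) + t * (a * b) < w := by
      have h1 : w % (a * b) + (w / (a * b)) * (a * b) = w := by
        rw [mul_comm (w / (a * b))]; exact Nat.mod_add_div w (a * b)
      calc w % (a * b) + t * (a * b)
          < w % (a * b) + (t + 1) * (a * b) := by
            exact Nat.add_lt_add_left ((Nat.mul_lt_mul_right hc).mpr (Nat.lt_succ_self t)) _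
        _ ≤ w % (a * b) + (w / (a * b)) * (a * b) :=
            Nat.add_le_add_left (Nat.mul_le_mul_right _ ht) _
        _ = w := h1
    constructor
    · rcases Nat.eq_zero_or_pos (w % (a * b) + t * (a * b)) with h0 | h0
      · exfalso
        have hmod0 : w % (a * b) = 0 := by omega
        have := sylv_pair_inj a b ha hb hab hp1 hp2 hb ha
          (by simpa using hmod0 : (a * p.1 + b * p.2) % (a * b) = (a * 0 + b * 0) % (a * b))
        have hw0 : w = 0 := by simp [hw, this.1, this.2]
        omega
      · exact h0
    · rintro ⟨x, y, hxy⟩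
      obtain ⟨a₁, b₁, t', h1, h2, hde⟩ := sylv_rep_decomp a b ha hb x y
      have hmod : (a * x + b * y) % (a * b) = (a * a₁ + b * b₁) % (a * b) := by
        rw [hde, Nat.add_mul_mod_self_right]
      have hweq : w % (a * b) = (a * a₁ + b * b₁) % (a * b) := by
        calc w % (a * b) = (w % (a * b) + t * (a * b)) % (a * b) := hn_mod.symm
          _ = (a * x + b * y) % (a * b) := by rw [hxy]
          _ = _ := hmod
      obtain ⟨e1, e2⟩ := sylv_pair_inj a b ha hb hab hp1 hp2 h1 h2 hweq
      have : w ≤ a * x + b * y := by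
        rw [hde, hw, e1, e2]; omega
      omega
  · rintro ⟨hn, hnr⟩
    have himg : (Finset.range b ×ˢ Finset.range a).image
        (fun p => (a * p.1 + b * p.2) % (a * b)) = Finset.range (a * b) := by
      apply Finset.eq_of_subset_of_card_le
      · intro r hr
        simp only [Finset.mem_image] at hr
        obtain ⟨p, _, rfl⟩ := hr
        exact Finset.mem_range.mpr (Nat.mod_lt _ hc)
      · rw [Finset.card_range, Finset.card_image_of_injOn, Finset.card_product,
          Finset.card_range, Finset.card_range]
        · exact le_of_eq (mul_comm a b)
        · intro p hp q hq hpq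
          simp only [Finset.coe_product, Set.mem_prod, Finset.mem_coe, Finset.mem_range] at hp hq
          obtain ⟨e1, e2⟩ := sylv_pair_inj a b ha hb hab hp.1 hp.2 hq.1 hq.2 hpq
          exact Prod.ext e1 e2
    have hmem : n % (a * b) ∈ Finset.range (a * b) := Finset.mem_range.mpr (Nat.mod_lt _ hc)
    rw [← himg, Finset.mem_image] at hmem
    obtain ⟨p, hp, hpmod⟩ := hmem
    simp only [Finset.mem_product, Finset.mem_range] at hp
    have hlt : n < a * p.1 + b * p.2 := by
      by_contra hge
      push_neg at hge
      have hdvd : a * b ∣ n - (a * p.1 + b * p.2) :=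
        (Nat.modEq_iff_dvd' hge).mp (hpmod : Nat.ModEq (a * b) (a * p.1 + b * p.2) n)
      obtain ⟨k, hk⟩ := hdvd
      have hne : n = a * p.1 + b * p.2 + a * b * k := by omega
      exact hnr ⟨p.1, p.2 + a * k, by rw [hne]; ring⟩
    refine ⟨p, ⟨hp.1, hp.2⟩, n / (a * b), ?_, ?_⟩
    · by_contra hge
      push_neg at hge
      have h2 : a * b * ((a * p.1 + b * p.2) / (a * b)) + (a * p.1 + b * p.2) % (a * b)
          = a * p.1 + b * p.2 := Nat.div_add_mod _ (a * b)
      have h1 : a * b * (n / (a * b)) + n % (a * b) = n := Nat.div_add_mod n (a * b)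
      have hle : a * p.1 + b * p.2 ≤ n := by
        calc a * p.1 + b * p.2
            = a * b * ((a * p.1 + b * p.2) / (a * b)) + (a * p.1 + b * p.2) % (a * b) := h2.symm
          _ ≤ a * b * (n / (a * b)) + n % (a * b) :=
              Nat.add_le_add (Nat.mul_le_mul_left _ hge) (le_of_eq hpmod)
          _ = n := h1
      exact absurd hlt (not_lt.mpr hle)
    · rw [hpmod, mul_comm (n / (a * b))]
      exact Nat.mod_add_div n (a * b)

/-- Telescoping sum over the non-representable numbers. -/
lemma sylv_telescope (a b : ℕ) (ha : 0 < a) (hb : 0 < b) (hab : Nat.gcd a b = 1)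
    (f : ℕ → ℚ) :
    ∑ n ∈ sylvNR a b, (f (n + a * b) - f n) =
      (∑ p ∈ Finset.range b ×ˢ Finset.range a, f (a * p.1 + b * p.2))
        - ∑ r ∈ Finset.range (a * b), f r := by
  have hc : 0 < a * b := Nat.mul_pos ha hb
  rw [sylvNR, Finset.sum_biUnion]
  · have hstep : ∀ p ∈ Finset.range b ×ˢ Finset.range a,
        (∑ n ∈ (Finset.range ((a * p.1 + b * p.2) / (a * b))).image
            (fun t => (a * p.1 + b * p.2) % (a * b) + t * (a * b)),
          (f (n + a * b) - f n)) =
        f (a * p.1 + b * p.2) - f ((a * p.1 + b * p.2) % (a * b)) := by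
      intro p _
      set w := a * p.1 + b * p.2 with hw
      rw [Finset.sum_image]
      · have htel := Finset.sum_range_sub (fun t => f (w % (a * b) + t * (a * b))) (w / (a * b))
        have : (∑ t ∈ Finset.range (w / (a * b)),
            (f (w % (a * b) + t * (a * b) + a * b) - f (w % (a * b) + t * (a * b)))) =
            (∑ t ∈ Finset.range (w / (a * b)),
            (f (w % (a * b) + (t + 1) * (a * b)) - f (w % (a * b) + t * (a * b)))) := by
          apply Finset.sum_congr rfl
          intro t _
          congr 2
          ring
        rw [this, htel]
        congr 2
        · rw [mul_comm (w / (a * b))]; exact Nat.mod_add_div w (a * b)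
        · simp
      · intro t _ t' _ he
        have : t * (a * b) = t' * (a * b) := by simp only at he; omega
        exact Nat.eq_of_mul_eq_mul_right hc this
    rw [Finset.sum_congr rfl hstep, Finset.sum_sub_distrib]
    congr 1
    have himg : (Finset.range b ×ˢ Finset.range a).image
        (fun p => (a * p.1 + b * p.2) % (a * b)) = Finset.range (a * b) := by
      apply Finset.eq_of_subset_of_card_le
      · intro r hr
        simp only [Finset.mem_image] at hr
        obtain ⟨p, _, rfl⟩ := hr
        exact Finset.mem_range.mpr (Nat.mod_lt _ hc)
      · rw [Finset.card_range, Finset.card_image_of_injOn, Finset.card_product,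
          Finset.card_range, Finset.card_range]
        · exact le_of_eq (mul_comm a b)
        · intro p hp q hq hpq
          simp only [Finset.coe_product, Set.mem_prod, Finset.mem_coe, Finset.mem_range] at hp hq
          obtain ⟨e1, e2⟩ := sylv_pair_inj a b ha hb hab hp.1 hp.2 hq.1 hq.2 hpq
          exact Prod.ext e1 e2
    rw [← himg, Finset.sum_image]
    intro p hp q hq hpq
    simp only [Finset.coe_product, Set.mem_prod, Finset.mem_coe, Finset.mem_product, Finset.mem_range] at hp hq
    obtain ⟨e1, e2⟩ := sylv_pair_inj a b ha hb hab hp.1 hp.2 hq.1 hq.2 hpq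
    exact Prod.ext e1 e2
  · intro p hp q hq hpq
    simp only [Finset.mem_coe, Finset.mem_product, Finset.mem_range] at hp hq
    simp only [Function.onFun]
    rw [Finset.disjoint_left]
    intro n hn1 hn2
    simp only [Finset.mem_image, Finset.mem_range] at hn1 hn2
    obtain ⟨t, _, ht⟩ := hn1
    obtain ⟨t', _, ht'⟩ := hn2
    have e1 : n % (a * b) = (a * p.1 + b * p.2) % (a * b) := by
      rw [← ht, Nat.add_mul_mod_self_right, Nat.mod_mod_of_dvd _ dvd_rfl]
    have e2 : n % (a * b) = (a * q.1 + b * q.2) % (a * b) := by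
      rw [← ht', Nat.add_mul_mod_self_right, Nat.mod_mod_of_dvd _ dvd_rfl]
    obtain ⟨f1, f2⟩ := sylv_pair_inj a b ha hb hab hp.1 hp.2 hq.1 hq.2 (e1 ▸ e2)
    exact hpq (Prod.ext f1 f2)

/-- Pointwise polynomial identity. -/
lemma sylv_pointwise (x C : ℚ) (m : ℕ) (hm : 1 ≤ m) :
    (m : ℚ) * C * x ^ (m - 1) =
      ((x + C) ^ m - x ^ m)
      - (m : ℚ) * C * (∑ j ∈ Finset.Icc 1 (m - 1),
          ((m - 1).choose j : ℚ) * C ^ j * x ^ (m - 1 - j))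
      + ∑ i ∈ Finset.Icc 2 m, (-1 : ℚ) ^ i * (m.choose i : ℚ) * C ^ i *
          (∑ j ∈ Finset.range (m - i + 1), ((m - i).choose j : ℚ) * C ^ j * x ^ (m - i - j)) := by
  have hj : ∀ k : ℕ, (∑ j ∈ Finset.range (k + 1),
      ((k.choose j : ℚ) * C ^ j * x ^ (k - j))) = (x + C) ^ k := by
    intro k
    rw [add_comm x C, add_pow]
    exact Finset.sum_congr rfl fun j _ => by ring
  have h2 : (∑ j ∈ Finset.Icc 1 (m - 1),
      ((m - 1).choose j : ℚ) * C ^ j * x ^ (m - 1 - j)) = (x + C) ^ (m - 1) - x ^ (m - 1) := by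
    have hsplit := hj (m - 1)
    rw [← Nat.Ico_zero_eq_range, Finset.sum_eq_sum_Ico_succ_bot (Nat.succ_pos _)] at hsplit
    rw [← Finset.Ico_add_one_right_eq_Icc]
    simp only [Nat.choose_zero_right, Nat.cast_one, pow_zero, one_mul, mul_one,
      Nat.sub_zero, Nat.succ_eq_add_one, zero_add] at hsplit
    linarith [hsplit]
  have h3 : (∑ i ∈ Finset.Icc 2 m, (-1 : ℚ) ^ i * (m.choose i : ℚ) * C ^ i * (x + C) ^ (m - i))
      = x ^ m - (x + C) ^ m + (m : ℚ) * C * (x + C) ^ (m - 1) := by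
    have hx : ((-C) + (x + C)) ^ m
        = ∑ k ∈ Finset.range (m + 1), (-C) ^ k * (x + C) ^ (m - k) * (m.choose k : ℚ) :=
      add_pow (-C) (x + C) m
    rw [show (-C) + (x + C) = x by ring] at hx
    rw [← Nat.Ico_zero_eq_range, Finset.sum_eq_sum_Ico_succ_bot (by omega : 0 < m + 1),
      Finset.sum_eq_sum_Ico_succ_bot (by omega : 1 < m + 1)] at hx
    have hIcc : Finset.Ico 2 (m + 1) = Finset.Icc 2 m := Finset.Ico_add_one_right_eq_Icc 2 m
    rw [hIcc] at hx
    simp only [pow_zero, pow_one, Nat.choose_zero_right, Nat.choose_one_right,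
      Nat.cast_one, Nat.sub_zero, one_mul, mul_one] at hx
    have hsum : (∑ i ∈ Finset.Icc 2 m, (-C) ^ i * (x + C) ^ (m - i) * (m.choose i : ℚ))
        = ∑ i ∈ Finset.Icc 2 m, (-1 : ℚ) ^ i * (m.choose i : ℚ) * C ^ i * (x + C) ^ (m - i) := by
      apply Finset.sum_congr rfl
      intro i _
      rw [neg_pow]
      ring
    rw [hsum] at hx
    linarith [hx]
  have h4 : (∑ i ∈ Finset.Icc 2 m, (-1 : ℚ) ^ i * (m.choose i : ℚ) * C ^ i *
      (∑ j ∈ Finset.range (m - i + 1), ((m - i).choose j : ℚ) * C ^ j * x ^ (m - i - j)))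
      = ∑ i ∈ Finset.Icc 2 m, (-1 : ℚ) ^ i * (m.choose i : ℚ) * C ^ i * (x + C) ^ (m - i) := by
    apply Finset.sum_congr rfl
    intro i _
    rw [hj (m - i)]
  rw [h2, h4, h3]
  ring

lemma sylv_faulhaber (a b : ℕ) (ha : 0 < a) (hb : 0 < b) (m : ℕ) (hm : 1 ≤ m) :
    (1 / ((m : ℚ) + 1)) *
        (∑ j ∈ Finset.range (m + 1),
          ((m + 1).choose j : ℚ) * bernoulli' j * ((a : ℚ) * b - 1) ^ (m + 1 - j))
      = ∑ r ∈ Finset.range (a * b), (r : ℚ) ^ m := by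
  have hc : 0 < a * b := Nat.mul_pos ha hb
  have h1 := sum_Ico_pow (a * b - 1) m
  rw [show a * b - 1 + 1 = a * b by omega] at h1
  have h0 : (∑ r ∈ Finset.range (a * b), (r : ℚ) ^ m)
      = ∑ k ∈ Finset.Ico 1 (a * b), (k : ℚ) ^ m := by
    rw [← Nat.Ico_zero_eq_range, Finset.sum_eq_sum_Ico_succ_bot hc]
    simp [zero_pow (by omega : m ≠ 0)]
  rw [h0, h1, Finset.mul_sum]
  apply Finset.sum_congr rfl
  intro i _
  have hcast : ((a * b - 1 : ℕ) : ℚ) = (a : ℚ) * b - 1 := by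
    rw [Nat.cast_sub (by omega : 1 ≤ a * b), Nat.cast_mul, Nat.cast_one]
  rw [hcast]
  ring

theorem sylvester_sum_recursion (a b : ℕ) (ha : 0 < a) (hb : 0 < b)
    (hab : Nat.gcd a b = 1) (m : ℕ) (hm : 1 ≤ m)
    (S : ℕ → ℚ)
    (hS : ∀ k : ℕ, S k = ∑ᶠ n ∈ {n : ℕ | 0 < n ∧ ¬∃ x y : ℕ, n = a * x + b * y}, (n : ℚ) ^ k) :
    (m : ℚ) * a * b * S (m - 1) =
      (∑ a₁ ∈ Finset.range b, ∑ b₁ ∈ Finset.range a,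
          ((a : ℚ) * a₁ + (b : ℚ) * b₁) ^ m)
      - (m : ℚ) * a * b *
          (∑ j ∈ Finset.Icc 1 (m - 1),
            ((m - 1).choose j : ℚ) * (a : ℚ) ^ j * (b : ℚ) ^ j * S (m - 1 - j))
      + (∑ i ∈ Finset.Icc 2 m, (-1 : ℚ) ^ i * (m.choose i : ℚ) * (a : ℚ) ^ i * (b : ℚ) ^ i *
          (∑ j ∈ Finset.range (m - i + 1),
            ((m - i).choose j : ℚ) * (a : ℚ) ^ j * (b : ℚ) ^ j * S (m - i - j)))
      - (1 / ((m : ℚ) + 1)) *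
          (∑ j ∈ Finset.range (m + 1),
            ((m + 1).choose j : ℚ) * bernoulli' j * ((a : ℚ) * b - 1) ^ (m + 1 - j)) := by
  have hset : {n : ℕ | 0 < n ∧ ¬∃ x y : ℕ, n = a * x + b * y} = ↑(sylvNR a b) := by
    ext n
    simp only [Set.mem_setOf_eq, Finset.mem_coe]
    exact (sylv_mem_NR a b ha hb hab n).symm
  have hs : ∀ k : ℕ, S k = ∑ n ∈ sylvNR a b, (n : ℚ) ^ k := by
    intro k
    rw [hS k, hset, finsum_mem_coe_finset]
  have hkey : (∑ n ∈ sylvNR a b, (((n + a * b : ℕ) : ℚ) ^ m - ((n : ℕ) : ℚ) ^ m))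
      = (∑ p ∈ Finset.range b ×ˢ Finset.range a, ((a * p.1 + b * p.2 : ℕ) : ℚ) ^ m)
        - ∑ r ∈ Finset.range (a * b), (r : ℚ) ^ m :=
    sylv_telescope a b ha hb hab (fun n => (n : ℚ) ^ m)
  have hA : (∑ a₁ ∈ Finset.range b, ∑ b₁ ∈ Finset.range a,
        ((a : ℚ) * a₁ + (b : ℚ) * b₁) ^ m)
      = ∑ p ∈ Finset.range b ×ˢ Finset.range a, ((a * p.1 + b * p.2 : ℕ) : ℚ) ^ m := by
    rw [Finset.sum_product]
    refine Finset.sum_congr rfl fun a₁ _ => Finset.sum_congr rfl fun b₁ _ => ?_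
    push_cast
    ring
  have hF := sylv_faulhaber a b ha hb m hm
  have swap2 : (∑ j ∈ Finset.Icc 1 (m - 1),
        ((m - 1).choose j : ℚ) * (a : ℚ) ^ j * (b : ℚ) ^ j *
          (∑ n ∈ sylvNR a b, (n : ℚ) ^ (m - 1 - j)))
      = ∑ n ∈ sylvNR a b, ∑ j ∈ Finset.Icc 1 (m - 1),
          ((m - 1).choose j : ℚ) * ((a : ℚ) * (b : ℚ)) ^ j * (n : ℚ) ^ (m - 1 - j) := by
    simp_rw [Finset.mul_sum]
    rw [Finset.sum_comm]
    exact Finset.sum_congr rfl fun n _ => Finset.sum_congr rfl fun j _ => by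
      rw [mul_pow]; ring
  have swap3 : (∑ i ∈ Finset.Icc 2 m, (-1 : ℚ) ^ i * (m.choose i : ℚ) * (a : ℚ) ^ i * (b : ℚ) ^ i *
        (∑ j ∈ Finset.range (m - i + 1),
          ((m - i).choose j : ℚ) * (a : ℚ) ^ j * (b : ℚ) ^ j *
            (∑ n ∈ sylvNR a b, (n : ℚ) ^ (m - i - j))))
      = ∑ n ∈ sylvNR a b, ∑ i ∈ Finset.Icc 2 m,
          (-1 : ℚ) ^ i * (m.choose i : ℚ) * ((a : ℚ) * (b : ℚ)) ^ i *
            (∑ j ∈ Finset.range (m - i + 1),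
              ((m - i).choose j : ℚ) * ((a : ℚ) * (b : ℚ)) ^ j * (n : ℚ) ^ (m - i - j)) := by
    have inner : ∀ i : ℕ, (∑ j ∈ Finset.range (m - i + 1),
          ((m - i).choose j : ℚ) * (a : ℚ) ^ j * (b : ℚ) ^ j *
            (∑ n ∈ sylvNR a b, (n : ℚ) ^ (m - i - j)))
        = ∑ n ∈ sylvNR a b, ∑ j ∈ Finset.range (m - i + 1),
            ((m - i).choose j : ℚ) * ((a : ℚ) * (b : ℚ)) ^ j * (n : ℚ) ^ (m - i - j) := by
      intro i
      simp_rw [Finset.mul_sum]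
      rw [Finset.sum_comm]
      exact Finset.sum_congr rfl fun n _ => Finset.sum_congr rfl fun j _ => by
        rw [mul_pow]; ring
    calc (∑ i ∈ Finset.Icc 2 m, (-1 : ℚ) ^ i * (m.choose i : ℚ) * (a : ℚ) ^ i * (b : ℚ) ^ i *
        (∑ j ∈ Finset.range (m - i + 1),
          ((m - i).choose j : ℚ) * (a : ℚ) ^ j * (b : ℚ) ^ j *
            (∑ n ∈ sylvNR a b, (n : ℚ) ^ (m - i - j))))
        = ∑ i ∈ Finset.Icc 2 m, ∑ n ∈ sylvNR a b,
            (-1 : ℚ) ^ i * (m.choose i : ℚ) * ((a : ℚ) * (b : ℚ)) ^ i *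
              (∑ j ∈ Finset.range (m - i + 1),
                ((m - i).choose j : ℚ) * ((a : ℚ) * (b : ℚ)) ^ j * (n : ℚ) ^ (m - i - j)) := by
          refine Finset.sum_congr rfl fun i _ => ?_
          rw [inner i, Finset.mul_sum]
          refine Finset.sum_congr rfl fun n _ => ?_
          rw [mul_pow]
          ring
      _ = _ := Finset.sum_comm
  simp only [hs]
  rw [hA, hF, swap2, swap3]
  have hsum : (m : ℚ) * a * b * (∑ n ∈ sylvNR a b, (n : ℚ) ^ (m - 1))
      + (m : ℚ) * a * b * (∑ n ∈ sylvNR a b, ∑ j ∈ Finset.Icc 1 (m - 1),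
          ((m - 1).choose j : ℚ) * ((a : ℚ) * (b : ℚ)) ^ j * (n : ℚ) ^ (m - 1 - j))
      - (∑ n ∈ sylvNR a b, ∑ i ∈ Finset.Icc 2 m,
          (-1 : ℚ) ^ i * (m.choose i : ℚ) * ((a : ℚ) * (b : ℚ)) ^ i *
            (∑ j ∈ Finset.range (m - i + 1),
              ((m - i).choose j : ℚ) * ((a : ℚ) * (b : ℚ)) ^ j * (n : ℚ) ^ (m - i - j)))
      = ∑ n ∈ sylvNR a b, (((n + a * b : ℕ) : ℚ) ^ m - ((n : ℕ) : ℚ) ^ m) := by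
    rw [Finset.mul_sum, Finset.mul_sum, ← Finset.sum_add_distrib, ← Finset.sum_sub_distrib]
    refine Finset.sum_congr rfl fun n _ => ?_
    have hpw := sylv_pointwise (n : ℚ) ((a : ℚ) * (b : ℚ)) m hm
    have hcast : ((n + a * b : ℕ) : ℚ) = (n : ℚ) + (a : ℚ) * (b : ℚ) := by
      push_cast; ring
    rw [hcast]
    linear_combination hpw
  linear_combination hsum + hkey
end

section
/- Let a and b be relatively prime positive integers. Then S₀(a,b), the cardinality of the set of nonrepresentable positive integers, equals (1/2)·(a-1)·(b-1). -/
private lemma sylvester_frob_nonrep (a b : ℕ) (ha : 2 ≤ a) (hb : 2 ≤ b)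
    (hab : Nat.Coprime a b) :
    ¬ ∃ x y : ℕ, a * b - a - b = a * x + b * y := by
  have h := (frobeniusNumber_pair hab ha hb).1
  rw [Set.mem_setOf_eq, AddSubmonoid.mem_closure_pair] at h
  push_neg at h
  rintro ⟨x, y, hxy⟩
  exact h x y (by simp [smul_eq_mul, hxy, mul_comm])

private lemma sylvester_le_frob (a b n : ℕ) (ha : 2 ≤ a) (hb : 2 ≤ b)
    (hab : Nat.Coprime a b) (hn : ¬ ∃ x y : ℕ, n = a * x + b * y) :
    n ≤ a * b - a - b := by
  have h := (frobeniusNumber_pair hab ha hb).2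
  refine h ?_
  rw [Set.mem_setOf_eq, AddSubmonoid.mem_closure_pair]
  push_neg
  intro x y hxy
  simp only [smul_eq_mul] at hxy
  exact hn ⟨x, y, by rw [← hxy]; ring⟩

private lemma sylvester_sym (a b n : ℕ) (ha : 2 ≤ a) (hb : 2 ≤ b)
    (hab : Nat.Coprime a b) (hn : ¬ ∃ x y : ℕ, n = a * x + b * y) :
    ∃ x y : ℕ, a * b - a - b - n = a * x + b * y := by
  haveI : NeZero b := ⟨by omega⟩
  set z : ZMod b := (n : ZMod b) * (a : ZMod b)⁻¹ with hz
  set x : ℕ := z.val with hxdef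
  have hx : x < b := ZMod.val_lt z
  have hu : IsUnit ((a : ℕ) : ZMod b) := (ZMod.isUnit_iff_coprime a b).mpr hab
  have hcast : ((a * x : ℕ) : ZMod b) = (n : ZMod b) := by
    push_cast
    rw [hxdef, ZMod.natCast_val, ZMod.cast_id, hz, ← mul_assoc, mul_comm (a : ZMod b),
      mul_assoc, ZMod.mul_inv_of_unit _ hu, mul_one]
  have hmod : a * x ≡ n [MOD b] := (ZMod.natCast_eq_natCast_iff _ _ _).mp hcast
  have hlt : n < a * x := by
    by_contra hle
    push_neg at hle
    obtain ⟨y, hy⟩ := (Nat.modEq_iff_dvd' hle).mp hmod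
    refine hn ⟨x, y, ?_⟩
    have : n = a * x + (n - a * x) := by omega
    rw [this, hy]
  obtain ⟨y, hy⟩ := (Nat.modEq_iff_dvd' hlt.le).mp hmod.symm
  have hy1 : 1 ≤ y := by
    rcases Nat.eq_zero_or_pos y with h | h
    · exfalso; rw [h, mul_zero] at hy; omega
    · exact h
  have hbley : b ≤ b * y := Nat.le_mul_of_pos_right b (by omega)
  have haxn : n + b ≤ a * x := by omega
  have haxb : a * x ≤ a * b - a := by
    calc a * x ≤ a * (b - 1) := Nat.mul_le_mul_left a (by omega)
    _ = a * b - a := by rw [Nat.mul_sub, mul_one]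
  refine ⟨b - 1 - x, y - 1, ?_⟩
  have c1 : n ≤ a * b - a - b := by omega
  have c2 : b ≤ a * b - a := by omega
  have c3 : a ≤ a * b := by nlinarith
  have hy' : (a : ℤ) * x - n = b * y := by
    have := congrArg (fun t : ℕ => (t : ℤ)) hy
    push_cast at this
    omega
  zify [c1, c2, c3, show x ≤ b - 1 by omega, show 1 ≤ b by omega, hy1]
  linear_combination hy'

theorem sylvester_number_formula (a b : ℕ) (ha : 0 < a) (hb : 0 < b)
    (hab : Nat.gcd a b = 1) :
    ({n : ℕ | 0 < n ∧ ¬∃ x y : ℕ, n = a * x + b * y}.ncard : ℚ) =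
      (1 / 2) * ((a : ℚ) - 1) * ((b : ℚ) - 1) := by
  classical
  rcases eq_or_lt_of_le (show 1 ≤ a from ha) with ha1 | ha2
  · have hset : {n : ℕ | 0 < n ∧ ¬∃ x y : ℕ, n = a * x + b * y} = ∅ := by
      ext n
      simp only [Set.mem_setOf_eq, Set.mem_empty_iff_false, iff_false, not_and, not_not]
      exact fun _ => ⟨n, 0, by rw [← ha1]; ring⟩
    rw [hset, Set.ncard_empty, ← ha1]
    norm_num
  rcases eq_or_lt_of_le (show 1 ≤ b from hb) with hb1 | hb2
  · have hset : {n : ℕ | 0 < n ∧ ¬∃ x y : ℕ, n = a * x + b * y} = ∅ := by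
      ext n
      simp only [Set.mem_setOf_eq, Set.mem_empty_iff_false, iff_false, not_and, not_not]
      exact fun _ => ⟨0, n, by rw [← hb1]; ring⟩
    rw [hset, Set.ncard_empty, ← hb1]
    norm_num
  have ha2' : 2 ≤ a := ha2
  have hb2' : 2 ≤ b := hb2
  have hab' : Nat.Coprime a b := hab
  set F := a * b - a - b with hF
  set s : Finset ℕ := (Finset.range (F + 1)).filter (fun n => ¬ ∃ x y : ℕ, n = a * x + b * y)
    with hs
  set t : Finset ℕ := (Finset.range (F + 1)).filter (fun n => ∃ x y : ℕ, n = a * x + b * y)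
    with ht
  have hset : {n : ℕ | 0 < n ∧ ¬∃ x y : ℕ, n = a * x + b * y} = ↑s := by
    ext n
    simp only [Set.mem_setOf_eq, hs, Finset.coe_filter, Finset.mem_range]
    constructor
    · rintro ⟨hpos, hrep⟩
      exact ⟨Nat.lt_succ_of_le (sylvester_le_frob a b n ha2' hb2' hab' hrep), hrep⟩
    · rintro ⟨hlt, hrep⟩
      refine ⟨?_, hrep⟩
      by_contra h
      exact hrep ⟨0, 0, by omega⟩
  rw [hset, Set.ncard_coe_finset]
  have hsum : t.card + s.card = F + 1 := by
    rw [hs, ht, Finset.card_filter_add_card_filter_not, Finset.card_range]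
  have hcard : s.card = t.card := by
    refine Finset.card_nbij' (fun n => F - n) (fun m => F - m) ?_ ?_ ?_ ?_
    · intro n hn
      rw [hs, Finset.mem_coe, Finset.mem_filter, Finset.mem_range] at hn
      show F - n ∈ t
      rw [ht, Finset.mem_filter, Finset.mem_range]
      exact ⟨by omega, sylvester_sym a b n ha2' hb2' hab' hn.2⟩
    · intro m hm
      rw [ht, Finset.mem_coe, Finset.mem_filter, Finset.mem_range] at hm
      show F - m ∈ s
      rw [hs, Finset.mem_filter, Finset.mem_range]
      refine ⟨by omega, ?_⟩
      rintro ⟨x1, y1, hxy1⟩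
      obtain ⟨x2, y2, hxy2⟩ := hm.2
      refine sylvester_frob_nonrep a b ha2' hb2' hab' ⟨x1 + x2, y1 + y2, ?_⟩
      have hFm : a * b - a - b = (F - m) + m := by omega
      rw [hFm, hxy1, hxy2]
      ring
    · intro n hn
      rw [hs, Finset.mem_coe, Finset.mem_filter, Finset.mem_range] at hn
      show F - (F - n) = n
      omega
    · intro m hm
      rw [ht, Finset.mem_coe, Finset.mem_filter, Finset.mem_range] at hm
      show F - (F - m) = m
      omega
  have hF1 : F + 1 = (a - 1) * (b - 1) := by
    obtain ⟨a', rfl⟩ : ∃ a', a = a' + 2 := ⟨a - 2, by omega⟩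
    obtain ⟨b', rfl⟩ : ∃ b', b = b' + 2 := ⟨b - 2, by omega⟩
    have h1 : (a' + 2) * (b' + 2) = a' * b' + 2 * a' + 2 * b' + 4 := by ring
    have h2 : (a' + 2 - 1) * (b' + 2 - 1) = a' * b' + a' + b' + 1 := by
      show (a' + 1) * (b' + 1) = a' * b' + a' + b' + 1
      ring
    omega
  have h2c : 2 * s.card = (a - 1) * (b - 1) := by omega
  have := congrArg (fun t : ℕ => (t : ℚ)) h2c
  push_cast [Nat.cast_sub (by omega : 1 ≤ a), Nat.cast_sub (by omega : 1 ≤ b)] at this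
  linarith
end

section
/- Let a and b be relatively prime positive integers. Then the sum of all nonrepresentable positive integers satisfies S₁(a,b) = (1/12)·(a-1)·(b-1)·(2ab − a − b − 1). -/
open Finset

lemma nonrep_char (a b : ℕ) (ha : 0 < a) (hb : 0 < b) (hab : Nat.gcd a b = 1) :
    {n : ℕ | 0 < n ∧ ¬∃ x y : ℕ, n = a * x + b * y} =
      ↑(((Finset.range a).sigma (fun y => Finset.Icc 1 (b*y/a))).image
          (fun p => b * p.1 - a * p.2)) := by
  haveI : NeZero a := ⟨ha.ne'⟩
  have hbu : IsUnit (b : ZMod a) := by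
    rw [ZMod.isUnit_iff_coprime]
    exact Nat.coprime_comm.mp hab
  ext n
  simp only [Set.mem_setOf_eq, Finset.coe_image, Set.mem_image, Finset.mem_coe,
    Finset.mem_sigma, Finset.mem_range, Finset.mem_Icc]
  constructor
  · rintro ⟨hn, hnr⟩
    set y : ℕ := ((b : ZMod a)⁻¹ * (n : ZMod a)).val with hy
    have hya : y < a := ZMod.val_lt _
    have hcast : ((b * y : ℕ) : ZMod a) = (n : ZMod a) := by
      push_cast [hy, ZMod.natCast_val, ZMod.cast_id]
      rw [← mul_assoc, ZMod.mul_inv_of_unit _ hbu, one_mul]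
    have hmod : b * y ≡ n [MOD a] := (ZMod.natCast_eq_natCast_iff _ _ _).mp hcast
    have hlt : n < b * y := by
      by_contra hle
      push_neg at hle
      obtain ⟨x, hx⟩ := (Nat.modEq_iff_dvd' hle).mp hmod
      exact hnr ⟨x, y, by omega⟩
    obtain ⟨k, hk⟩ := (Nat.modEq_iff_dvd' hlt.le).mp hmod.symm
    have hk0 : k ≠ 0 := by rintro rfl; simp at hk; omega
    refine ⟨⟨y, k⟩, ⟨hya, Nat.one_le_iff_ne_zero.mpr hk0, ?_⟩, ?_⟩
    · show k ≤ b * y / a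
      rw [Nat.le_div_iff_mul_le ha, mul_comm]; omega
    · show b * y - a * k = n; omega
  · rintro ⟨⟨y, k⟩, ⟨hya, hk1, hk2⟩, rfl⟩
    simp only at *
    rw [Nat.le_div_iff_mul_le ha] at hk2
    have hk2' : a * k ≤ b * y := by rw [mul_comm] at hk2; omega
    have hpos : 0 < b * y - a * k := by
      rcases Nat.lt_or_ge (a*k) (b*y) with h | h
      · omega
      · exfalso
        have heq : a * k = b * y := le_antisymm hk2' h
        have hd1 : a ∣ y * b := ⟨k, by rw [mul_comm]; omega⟩
        have hdy : a ∣ y := Nat.Coprime.dvd_of_dvd_mul_right hab hd1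
        have hy0 : y = 0 := Nat.eq_zero_of_dvd_of_lt hdy hya
        subst hy0
        simp at heq
        omega
    refine ⟨hpos, ?_⟩
    rintro ⟨x, y', hxy⟩
    have hcast : ((b * y - a * k : ℕ) : ZMod a) = ((a * x + b * y' : ℕ) : ZMod a) := by
      rw [hxy]
    rw [Nat.cast_sub hk2'] at hcast
    push_cast [ZMod.natCast_self] at hcast
    have h2 : (b : ZMod a) * y = (b : ZMod a) * y' := by linear_combination hcast
    have hyy' : (y : ZMod a) = (y' : ZMod a) := hbu.mul_left_cancel h2
    have hy'm : y' % a = y := by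
      have hv := ZMod.val_cast_of_lt hya
      rw [hyy'] at hv
      rw [← hv, ZMod.val_natCast]
    have h0 := Nat.div_add_mod y' a
    rw [hy'm] at h0
    have hy'eq : y' = a * (y' / a) + y := by omega
    have hzx := congrArg (fun t : ℕ => (t : ℤ)) hxy
    push_cast [hk2'] at hzx
    have hyz : (y' : ℤ) = a * (y' / a : ℕ) + y := by exact_mod_cast congrArg (fun t : ℕ => (t : ℤ)) hy'eq
    rw [hyz] at hzx
    have hzz : (a:ℤ)*k + a*x + a*(b*(y' / a : ℕ)) = 0 := by linear_combination -hzx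
    have h1 : (0:ℤ) < a*k := by
      have : (0:ℤ) < a := by exact_mod_cast ha
      have : (0:ℤ) < k := by exact_mod_cast Nat.pos_of_ne_zero (by omega : k ≠ 0)
      positivity
    have h3 : (0:ℤ) ≤ a*x := by positivity
    have h4 : (0:ℤ) ≤ (a:ℤ)*(b*(y' / a : ℕ)) := by positivity
    linarith


lemma sum_Icc_id' (m : ℕ) : ∑ k ∈ Finset.Icc 1 m, (k:ℚ) = m*(m+1)/2 := by
  induction m with
  | zero => simp
  | succ n ih =>
    rw [Finset.sum_Icc_succ_top (by omega), ih]; push_cast; ring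

lemma sum_range_sq' (a : ℕ) : ∑ y ∈ Finset.range a, (y:ℚ)^2 = a*(a-1)*(2*a-1)/6 := by
  induction a with
  | zero => simp
  | succ n ih => rw [Finset.sum_range_succ, ih]; push_cast; ring

lemma sum_range_id'' (a : ℕ) : ∑ y ∈ Finset.range a, (y:ℚ) = a*(a-1)/2 := by
  induction a with
  | zero => simp
  | succ n ih => rw [Finset.sum_range_succ, ih]; push_cast; ring

theorem sylvester_sum_formula (a b : ℕ) (ha : 0 < a) (hb : 0 < b)
    (hab : Nat.gcd a b = 1) :
    (∑ᶠ n ∈ {n : ℕ | 0 < n ∧ ¬∃ x y : ℕ, n = a * x + b * y}, (n : ℚ)) =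
      (1 / 12) * ((a : ℚ) - 1) * ((b : ℚ) - 1) * (2 * a * b - a - b - 1) := by
  haveI : NeZero a := ⟨ha.ne'⟩
  have ha0 : (a : ℚ) ≠ 0 := Nat.cast_ne_zero.mpr ha.ne'
  -- injectivity
  have hinj : ∀ p ∈ ((Finset.range a).sigma (fun y => Finset.Icc 1 (b*y/a))),
      ∀ q ∈ ((Finset.range a).sigma (fun y => Finset.Icc 1 (b*y/a))),
      (fun p : (_ : ℕ) × ℕ => b * p.1 - a * p.2) p =
        (fun p : (_ : ℕ) × ℕ => b * p.1 - a * p.2) q → p = q := by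
    rintro ⟨y1, k1⟩ hp ⟨y2, k2⟩ hq heq
    simp only [Finset.mem_sigma, Finset.mem_range, Finset.mem_Icc] at hp hq
    simp only at heq
    have h1 : a * k1 ≤ b * y1 := by
      have := hp.2.2; rw [Nat.le_div_iff_mul_le ha, mul_comm k1 a] at this; exact this
    have h2 : a * k2 ≤ b * y2 := by
      have := hq.2.2; rw [Nat.le_div_iff_mul_le ha, mul_comm k2 a] at this; exact this
    -- mod a : b*y1 ≡ b*y2
    have hmod : b * y1 ≡ b * y2 [MOD a] := by
      have h3 : b * y1 - a * k1 ≡ b * y2 - a * k2 [MOD a] := by rw [heq]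
      have e1 : b * y1 = (b * y1 - a * k1) + a * k1 := by omega
      have e2 : b * y2 = (b * y2 - a * k2) + a * k2 := by omega
      calc b * y1 = (b * y1 - a * k1) + a * k1 := e1
        _ ≡ (b * y2 - a * k2) + a * k1 [MOD a] := by exact Nat.ModEq.add_right _ h3
        _ ≡ (b * y2 - a * k2) + a * k2 [MOD a] := by
              exact Nat.ModEq.add_left _
                (((Nat.modEq_zero_iff_dvd).mpr ⟨k1, rfl⟩).trans
                  ((Nat.modEq_zero_iff_dvd).mpr ⟨k2, rfl⟩).symm)
        _ = b * y2 := e2.symm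
    have hy : y1 ≡ y2 [MOD a] := Nat.ModEq.cancel_left_of_coprime hab hmod
    have hyy : y1 = y2 := by
      have := hy
      unfold Nat.ModEq at this
      rw [Nat.mod_eq_of_lt hp.1, Nat.mod_eq_of_lt hq.1] at this
      exact this
    subst hyy
    have hakk : a * k1 = a * k2 := by omega
    have : k1 = k2 := Nat.eq_of_mul_eq_mul_left ha hakk
    simp [this]
  rw [nonrep_char a b ha hb hab, finsum_mem_coe_finset, Finset.sum_image hinj,
    Finset.sum_sigma]
  -- now a double sum
  have hcastval : ∀ y ∈ Finset.range a, ∑ k ∈ Finset.Icc 1 (b*y/a), ((b * y - a * k : ℕ) : ℚ)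
      = ∑ k ∈ Finset.Icc 1 (b*y/a), ((b:ℚ) * y - a * k) := by
    intro y _
    apply Finset.sum_congr rfl
    intro k hk
    rw [Finset.mem_Icc] at hk
    have : a * k ≤ b * y := by
      have := hk.2; rw [Nat.le_div_iff_mul_le ha, mul_comm k a] at this; exact this
    rw [Nat.cast_sub this]
    push_cast; ring
  rw [Finset.sum_congr rfl hcastval]
  -- inner sum closed form
  have hinner : ∀ y : ℕ, ∑ k ∈ Finset.Icc 1 (b*y/a), ((b:ℚ) * y - a * k)
      = ((b*y/a : ℕ) : ℚ) * ((b:ℚ)*y) - a * (((b*y/a : ℕ):ℚ) * ((b*y/a : ℕ) + 1) / 2) := by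
    intro y
    rw [Finset.sum_sub_distrib, Finset.sum_const, ← Finset.mul_sum, sum_Icc_id',
      Nat.card_Icc]
    simp only [Nat.add_sub_cancel, nsmul_eq_mul]
    try ring
  rw [Finset.sum_congr rfl (fun y _ => hinner y)]
  -- per-y identity dividing by 2a
  have hper : ∀ y : ℕ, ((b*y/a : ℕ) : ℚ) * ((b:ℚ)*y) - a * (((b*y/a : ℕ):ℚ) * ((b*y/a : ℕ) + 1) / 2)
      = (((b*y : ℕ):ℚ)^2 - ((b*y % a : ℕ):ℚ)^2 - (a:ℚ)^2 * ((b*y/a : ℕ):ℚ)) / (2*a) := by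
    intro y
    have hda := Nat.div_add_mod (b*y) a
    have hC : ((b*y : ℕ) : ℚ) = (a:ℚ) * ((b*y/a : ℕ):ℚ) + ((b*y % a : ℕ):ℚ) := by
      exact_mod_cast congrArg (fun t : ℕ => (t : ℚ)) hda.symm
    have hC2 : (b:ℚ) * y = (a:ℚ) * ((b*y/a : ℕ):ℚ) + ((b*y % a : ℕ):ℚ) := by
      push_cast at hC ⊢; linarith
    rw [hC, hC2]
    field_simp
    ring
  rw [Finset.sum_congr rfl (fun y _ => hper y)]
  rw [← Finset.sum_div]
  -- split the numerator sum
  have hsplit : ∑ y ∈ Finset.range a,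
      ((((b*y : ℕ):ℚ))^2 - ((b*y % a : ℕ):ℚ)^2 - (a:ℚ)^2 * ((b*y/a : ℕ):ℚ))
      = (∑ y ∈ Finset.range a, ((b:ℚ)*y)^2)
        - (∑ y ∈ Finset.range a, ((b*y % a : ℕ):ℚ)^2)
        - (a:ℚ)^2 * (∑ y ∈ Finset.range a, ((b*y/a : ℕ):ℚ)) := by
    rw [Finset.mul_sum, ← Finset.sum_sub_distrib, ← Finset.sum_sub_distrib]
    apply Finset.sum_congr rfl
    intro y _
    push_cast
    ring
  rw [hsplit]
  -- residues are a permutation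
  have hinj2 : Set.InjOn (fun y => b * y % a) (Finset.range a) := by
    intro y1 h1 y2 h2 he
    simp only [Finset.coe_range, Set.mem_Iio] at h1 h2
    have hmod : b * y1 ≡ b * y2 [MOD a] := he
    have hy := Nat.ModEq.cancel_left_of_coprime hab hmod
    unfold Nat.ModEq at hy
    rwa [Nat.mod_eq_of_lt h1, Nat.mod_eq_of_lt h2] at hy
  have himg : (Finset.range a).image (fun y => b * y % a) = Finset.range a := by
    apply Finset.eq_of_subset_of_card_le
    · intro z hz
      simp only [Finset.mem_image, Finset.mem_range] at hz ⊢
      obtain ⟨y, _, rfl⟩ := hz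
      exact Nat.mod_lt _ ha
    · rw [Finset.card_image_of_injOn hinj2, Finset.card_range]
  have hres : ∑ y ∈ Finset.range a, ((b*y % a : ℕ):ℚ)^2 = ∑ y ∈ Finset.range a, (y:ℚ)^2 := by
    conv_rhs => rw [← himg]
    rw [Finset.sum_image (fun x hx y hy h => hinj2 (by simpa using hx) (by simpa using hy) h)]
  rw [hres]
  -- sum of quotients
  have hsumdiv : (a:ℚ) * (∑ y ∈ Finset.range a, ((b*y/a : ℕ):ℚ))
      = ((b:ℚ) - 1) * (a*(a-1)/2) := by
    have : ∀ y ∈ Finset.range a, (a:ℚ) * ((b*y/a : ℕ):ℚ) = (b:ℚ)*y - ((b*y % a : ℕ):ℚ) := by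
      intro y _
      have hda := Nat.div_add_mod (b*y) a
      have hC : ((b*y : ℕ) : ℚ) = (a:ℚ) * ((b*y/a : ℕ):ℚ) + ((b*y % a : ℕ):ℚ) := by
        exact_mod_cast congrArg (fun t : ℕ => (t : ℚ)) hda.symm
      push_cast at hC
      linarith
    rw [Finset.mul_sum, Finset.sum_congr rfl this, Finset.sum_sub_distrib]
    have hres2 : ∑ y ∈ Finset.range a, ((b*y % a : ℕ):ℚ) = ∑ y ∈ Finset.range a, (y:ℚ) := by
      conv_rhs => rw [← himg]
      rw [Finset.sum_image (fun x hx y hy h => hinj2 (by simpa using hx) (by simpa using hy) h)]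
    rw [hres2, ← Finset.mul_sum, sum_range_id'']
    ring
  have hsq : ∑ y ∈ Finset.range a, ((b:ℚ)*y)^2 = (b:ℚ)^2 * (a*(a-1)*(2*a-1)/6) := by
    rw [← sum_range_sq' a, Finset.mul_sum]
    apply Finset.sum_congr rfl
    intro y _
    ring
  rw [hsq, sum_range_sq']
  -- finish
  have hM : (∑ y ∈ Finset.range a, ((b*y/a : ℕ):ℚ)) = ((b:ℚ) - 1) * (a*(a-1)/2) / a := by
    field_simp at hsumdiv ⊢
    linarith
  rw [hM]
  field_simp
  ring
end

section
/- Let a and b be relatively prime positive integers with b = a·q₀ + r₀ where q₀, r₀ are nonnegative integers and 0 < r₀ < a. Let m be a nonnegative integer, let r = m mod a, let r_m = r mod r₀, and let k_m be the unique integer with 0 ≤ k_m < r₀ and a·k_m ≡ −r_m (mod r₀). Then m can be expressed as a·x + b·y for some nonnegative integers x, y if and only if ⌊m/a⌋ ≥ q₀·(m/b) + k_m (an inequality of rational numbers). -/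
theorem representability_criterion (a b : ℕ) (ha : 0 < a) (hb : 0 < b)
    (hab : Nat.gcd a b = 1)
    (q₀ r₀ : ℕ) (hb_eq : b = a * q₀ + r₀) (hr₀_pos : 0 < r₀) (hr₀_lt : r₀ < a)
    (m : ℕ) (r rm km : ℕ) (hr : r = m % a) (hrm : rm = r % r₀)
    (hkm_lt : km < r₀) (hkm : (a * km + rm) % r₀ = 0) :
    (∃ x y : ℕ, m = a * x + b * y) ↔
      ((m / a : ℕ) : ℚ) ≥ (q₀ : ℚ) * (m : ℚ) / (b : ℚ) + (km : ℚ) := by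
  set y₀ : ℕ := r / r₀ + (a * km + rm) / r₀ with hy₀def
  have hdvd : r₀ ∣ (a * km + rm) := Nat.dvd_of_mod_eq_zero hkm
  have hE1 : r₀ * y₀ = r + a * km := by
    have h1 : r₀ * (r / r₀) + r % r₀ = r := Nat.div_add_mod r r₀
    have h2 : r₀ * ((a * km + rm) / r₀) = a * km + rm := Nat.mul_div_cancel' hdvd
    rw [hy₀def, Nat.mul_add, h2]
    omega
  have hrlt : r < a := hr ▸ Nat.mod_lt m ha
  have hy0_lt : y₀ < a := by
    have h3 : a * (km + 1) ≤ a * r₀ := Nat.mul_le_mul le_rfl (Nat.succ_le_of_lt hkm_lt)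
    have h4 : a * (km + 1) = a * km + a := by ring
    have h5 : r₀ * y₀ < r₀ * a := by
      rw [hE1]
      have : r₀ * a = a * r₀ := by ring
      linarith
    exact Nat.lt_of_mul_lt_mul_left h5
  have hco : Nat.gcd a r₀ = 1 := by
    rw [hb_eq, Nat.add_comm, Nat.gcd_add_mul_left_right] at hab
    exact hab
  -- key nat lemma
  have hkey : (∃ x y : ℕ, m = a * x + b * y) ↔ b * y₀ ≤ m := by
    constructor
    · rintro ⟨x, y, hxy⟩
      have e1 : b ≡ r₀ [MOD a] := by
        show b % a = r₀ % a
        rw [hb_eq, Nat.add_comm, Nat.add_mul_mod_self_left]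
      have e2 : m ≡ b * y [MOD a] := by
        show m % a = (b * y) % a
        rw [hxy, Nat.add_comm, Nat.add_mul_mod_self_left]
      have e3 : r₀ * y ≡ r [MOD a] := by
        have h1 : b * y ≡ r₀ * y [MOD a] := e1.mul_right y
        have h2 : m ≡ r [MOD a] := hr ▸ (Nat.mod_modEq m a).symm
        exact (h1.symm.trans e2.symm).trans h2
      have e4 : r₀ * y₀ ≡ r [MOD a] := by
        show (r₀ * y₀) % a = r % a
        rw [hE1, Nat.add_mul_mod_self_left]
      have e5 : r₀ * (y % a) ≡ r₀ * y [MOD a] := (Nat.mod_modEq y a).mul_left r₀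
      have e6 : y % a ≡ y₀ [MOD a] := by
        have : r₀ * (y % a) ≡ r₀ * y₀ [MOD a] := (e5.trans e3).trans e4.symm
        exact Nat.ModEq.cancel_left_of_coprime hco this
      have e7 : y % a = y₀ := by
        have := e6
        unfold Nat.ModEq at this
        rw [Nat.mod_eq_of_lt (Nat.mod_lt y ha), Nat.mod_eq_of_lt hy0_lt] at this
        exact this
      have h8 : b * y₀ ≤ b * y := by
        rw [← e7]
        exact Nat.mul_le_mul le_rfl (Nat.mod_le y a)
      have h9 : b * y ≤ m := by rw [hxy]; exact Nat.le_add_left _ _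
      exact le_trans h8 h9
    · intro h
      have hm := Nat.div_add_mod m a
      have hkeyeq : m + a * (q₀ * y₀) + a * km = a * (m / a) + b * y₀ := by
        have h1 : b * y₀ = a * (q₀ * y₀) + r₀ * y₀ := by rw [hb_eq]; ring
        rw [h1, hE1]
        linarith [hr ▸ hm]
      have ht : q₀ * y₀ + km ≤ m / a := by
        have h2 : a * (q₀ * y₀ + km) = a * (q₀ * y₀) + a * km := by ring
        have h3 : a * (q₀ * y₀ + km) ≤ a * (m / a) := by linarith
        exact Nat.le_of_mul_le_mul_left h3 ha
      refine ⟨m / a - (q₀ * y₀ + km), y₀, ?_⟩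
      have h4 : a * (m / a - (q₀ * y₀ + km)) + a * (q₀ * y₀ + km) = a * (m / a) := by
        rw [← Nat.mul_add, Nat.sub_add_cancel ht]
      have h5 : a * (q₀ * y₀ + km) = a * (q₀ * y₀) + a * km := by ring
      linarith
  rw [hkey]
  -- now the rational part
  have hb0 : (0 : ℚ) < b := by exact_mod_cast hb
  have ha0 : (0 : ℚ) < a := by exact_mod_cast ha
  have hr00 : (0 : ℚ) < r₀ := by exact_mod_cast hr₀_pos
  have E1 : (r₀ : ℚ) * y₀ = r + a * km := by exact_mod_cast hE1
  have E2 : (a : ℚ) * ((m / a : ℕ) : ℚ) + r = m := by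
    have h := Nat.div_add_mod m a
    rw [← hr] at h
    exact_mod_cast h
  have E3 : (b : ℚ) = a * q₀ + r₀ := by exact_mod_cast hb_eq
  have key : (a : ℚ) * (((m / a : ℕ) : ℚ) * b - ((q₀ : ℚ) * m + km * b)) =
      r₀ * ((m : ℚ) - b * y₀) := by
    linear_combination (b : ℚ) * E1 + (b : ℚ) * E2 + (m : ℚ) * E3
  rw [ge_iff_le, div_add' _ _ _ hb0.ne', div_le_iff₀ hb0]
  constructor
  · intro h
    have h' : (b : ℚ) * y₀ ≤ m := by exact_mod_cast h
    nlinarith [mul_nonneg hr00.le (sub_nonneg.mpr h')]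
  · intro h
    have h' : (b : ℚ) * y₀ ≤ m := by nlinarith [mul_nonneg ha0.le (sub_nonneg.mpr h)]
    exact_mod_cast h'
end

section
/- For any positive integer a, a nonnegative integer m can be expressed in the form a·x + (a+1)·y for nonnegative integers x and y if and only if ⌊m/a⌋ ≥ m/(a+1) (an inequality of rational numbers). -/
theorem representability_consecutive (a : ℕ) (ha : 0 < a) (m : ℕ) :
    (∃ x y : ℕ, m = a * x + (a + 1) * y) ↔
      ((m / a : ℕ) : ℚ) ≥ (m : ℚ) / ((a : ℚ) + 1) := by
  have hpos : (0:ℚ) < (a:ℚ) + 1 := by positivity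
  rw [ge_iff_le, div_le_iff₀ hpos]
  have key : ((m:ℚ) ≤ ((m / a : ℕ):ℚ) * ((a:ℚ)+1)) ↔ m ≤ (m / a) * (a+1) := by
    constructor
    · intro h; exact_mod_cast h
    · intro h; exact_mod_cast h
  rw [key]
  constructor
  · rintro ⟨x, y, rfl⟩
    have h1 : x + y ≤ (a * x + (a + 1) * y) / a := by
      rw [Nat.le_div_iff_mul_le ha]; nlinarith
    calc a * x + (a + 1) * y ≤ (x + y) * (a + 1) := by nlinarith
      _ ≤ ((a * x + (a + 1) * y) / a) * (a + 1) := by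
          exact Nat.mul_le_mul_right _ h1
  · intro h
    have hm : a * (m / a) + m % a = m := Nat.div_add_mod m a
    have hr : m % a ≤ m / a := by nlinarith [hm, h]
    obtain ⟨d, hd⟩ := Nat.exists_eq_add_of_le hr
    have h2 : a * (m / a) = a * (m % a) + a * d := by rw [hd]; ring
    refine ⟨d, m % a, ?_⟩
    calc m = a * (m / a) + m % a := hm.symm
      _ = a * (m % a) + a * d + m % a := by rw [h2]
      _ = a * d + (a + 1) * (m % a) := by ring
end

section
/- For any odd positive integer a ≥ 3, a nonnegative integer m can be expressed in the form a·x + (a+2)·y for nonnegative integers x and y if and only if one of the following holds: (1) m mod a is even and ⌊m/a⌋ ≥ m/(a+2); or (2) m mod a is odd and ⌊m/a⌋ ≥ m/(a+2) + 1 (inequalities of rational numbers). -/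
theorem representability_odd_gap_two (a : ℕ) (ha_odd : Odd a) (ha : 3 ≤ a) (m : ℕ) :
    (∃ x y : ℕ, m = a * x + (a + 2) * y) ↔
      ((m % a) % 2 = 0 ∧ ((m / a : ℕ) : ℚ) ≥ (m : ℚ) / ((a : ℚ) + 2)) ∨
      ((m % a) % 2 = 1 ∧ ((m / a : ℕ) : ℚ) ≥ (m : ℚ) / ((a : ℚ) + 2) + 1) := by
  have ha0 : 0 < a := by omega
  have ha2 : a % 2 = 1 := Nat.odd_iff.mp ha_odd
  have hpos : (0:ℚ) < (a:ℚ) + 2 := by positivity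
  have hq1 : (((m / a : ℕ) : ℚ) ≥ (m : ℚ) / ((a : ℚ) + 2)) ↔ m ≤ (m / a) * (a + 2) := by
    rw [ge_iff_le, div_le_iff₀ hpos]
    constructor <;> intro h <;> exact_mod_cast h
  have hq2 : (((m / a : ℕ) : ℚ) ≥ (m : ℚ) / ((a : ℚ) + 2) + 1) ↔
      m + (a + 2) ≤ (m / a) * (a + 2) := by
    constructor
    · intro h
      have h1 : (m : ℚ) / ((a : ℚ) + 2) ≤ ((m / a : ℕ) : ℚ) - 1 := by linarith
      have h2 : (m : ℚ) ≤ (((m / a : ℕ) : ℚ) - 1) * ((a : ℚ) + 2) :=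
        (div_le_iff₀ hpos).mp h1
      have h3 : (m : ℚ) + ((a : ℚ) + 2) ≤ ((m / a : ℕ) : ℚ) * ((a : ℚ) + 2) := by
        nlinarith
      exact_mod_cast h3
    · intro h
      have h3 : (m : ℚ) + ((a : ℚ) + 2) ≤ ((m / a : ℕ) : ℚ) * ((a : ℚ) + 2) := by
        exact_mod_cast h
      have h2 : (m : ℚ) ≤ (((m / a : ℕ) : ℚ) - 1) * ((a : ℚ) + 2) := by nlinarith
      have h1 := (div_le_iff₀ hpos).mpr h2
      linarith
  rw [hq1, hq2]
  constructor
  · rintro ⟨x, y, rfl⟩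
    set s := (2 * y) % a with hs_def
    set t := (2 * y) / a with ht_def
    have hs : s < a := Nat.mod_lt _ ha0
    have h2y : 2 * y = a * t + s := (Nat.div_add_mod (2 * y) a).symm
    have hm : a * x + (a + 2) * y = s + a * (x + y + t) := by
      rw [show a * x + (a + 2) * y = a * x + a * y + 2 * y from by ring, h2y]; ring
    have hmod : (a * x + (a + 2) * y) % a = s := by
      rw [hm, Nat.add_mul_mod_self_left, Nat.mod_eq_of_lt hs]
    have hdiv : (a * x + (a + 2) * y) / a = x + y + t := by
      rw [hm, Nat.add_mul_div_left _ _ ha0, Nat.div_eq_of_lt hs, zero_add]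
    rw [hmod, hdiv]
    rcases Nat.even_or_odd s with hse | hso
    · left
      refine ⟨Nat.even_iff.mp hse, ?_⟩
      nlinarith
    · right
      refine ⟨Nat.odd_iff.mp hso, ?_⟩
      have ht1 : 1 ≤ t := by
        rcases Nat.eq_zero_or_pos t with h0 | h; swap; · exact h
        exfalso
        have h1 : 2 * y = s := by rw [h2y, h0]; ring
        have h2 : s % 2 = 0 := by omega
        have h3 : s % 2 = 1 := Nat.odd_iff.mp hso
        omega
      have hat : a ≤ a * t := Nat.le_mul_of_pos_right a ht1
      nlinarith [hat]
  · intro h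
    have hm : m = a * (m / a) + m % a := (Nat.div_add_mod m a).symm
    set q := m / a with hq_def
    set r := m % a with hr_def
    have hr : r < a := Nat.mod_lt _ ha0
    rcases h with ⟨he, hle⟩ | ⟨ho, hle⟩
    · have h2q : r ≤ 2 * q := by nlinarith
      refine ⟨q - r / 2, r / 2, ?_⟩
      have hr2 : 2 * (r / 2) = r := by omega
      have hx : q = (q - r / 2) + r / 2 := by omega
      have key : a * (q - r / 2) + (a + 2) * (r / 2)
          = a * (q - r / 2) + a * (r / 2) + 2 * (r / 2) := by ring
      rw [key, hr2, ← Nat.mul_add, ← hx]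
      exact hm
    · have h2q : r + a + 2 ≤ 2 * q := by nlinarith
      have hy2 : 2 * ((r + a) / 2) = r + a := by omega
      set y := (r + a) / 2 with hy_def
      refine ⟨q - y - 1, y, ?_⟩
      have hx : q = (q - y - 1) + y + 1 := by omega
      have key : a * (q - y - 1) + (a + 2) * y + a = m + a := by
        rw [hm]
        nth_rewrite 2 [hx]
        have e1 : a * (q - y - 1) + (a + 2) * y + a
            = a * (q - y - 1) + a * y + a + 2 * y := by ring
        rw [e1, hy2]
        ring
      omega
end

section
/- Let a and b be relatively prime positive integers. Every integer n with 0 ≤ n ≤ a·b − 1 that is not representable as a·x + b·y with x, y nonnegative integers can be written as n = a·a₁ + b·b₁ − a·b for some integers a₁, b₁ with 0 ≤ a₁ ≤ b−1 and 0 ≤ b₁ ≤ a−1, and conversely every number of the form a·a₁ + b·b₁ − a·b with 0 ≤ a₁ ≤ b−1, 0 ≤ b₁ ≤ a−1 that is positive is not representable. -/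
theorem nonrepresentable_characterization (a b : ℕ) (ha : 0 < a) (hb : 0 < b)
    (hab : Nat.gcd a b = 1) :
    (∀ n : ℤ, 0 ≤ n → n ≤ (a : ℤ) * b - 1 →
        (¬∃ x y : ℕ, n = (a : ℤ) * x + (b : ℤ) * y) →
        ∃ a₁ b₁ : ℤ, 0 ≤ a₁ ∧ a₁ ≤ (b : ℤ) - 1 ∧ 0 ≤ b₁ ∧ b₁ ≤ (a : ℤ) - 1 ∧
          n = (a : ℤ) * a₁ + (b : ℤ) * b₁ - (a : ℤ) * b) ∧
    (∀ a₁ b₁ : ℤ, 0 ≤ a₁ → a₁ ≤ (b : ℤ) - 1 → 0 ≤ b₁ → b₁ ≤ (a : ℤ) - 1 →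
        0 < (a : ℤ) * a₁ + (b : ℤ) * b₁ - (a : ℤ) * b →
        ¬∃ x y : ℕ, (a : ℤ) * a₁ + (b : ℤ) * b₁ - (a : ℤ) * b = (a : ℤ) * x + (b : ℤ) * y) := by
  have haZ : (0:ℤ) < a := by exact_mod_cast ha
  have hbZ : (0:ℤ) < b := by exact_mod_cast hb
  have hbez : (1:ℤ) = a * Nat.gcdA a b + b * Nat.gcdB a b := by
    have := Nat.gcd_eq_gcd_ab a b
    rw [hab] at this
    exact_mod_cast this
  constructor
  · intro n hn0 hn1 hnr
    set c := Nat.gcdA a b with hc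
    set a₁ := (n * c) % b with ha₁
    have ha₁0 : 0 ≤ a₁ := Int.emod_nonneg _ (ne_of_gt hbZ)
    have ha₁lt : a₁ < b := Int.emod_lt_of_pos _ hbZ
    have hdvd : (b:ℤ) ∣ n - a * a₁ := by
      have h1 : n - a * a₁ = n * (1 - a * c) + a * b * (n * c / b) := by
        have := Int.emod_add_mul_ediv (n * c) b
        rw [ha₁]
        nlinarith [this]
      rw [h1]
      have : (1:ℤ) - a * c = b * Nat.gcdB a b := by linarith [hbez]
      rw [this]
      exact dvd_add ⟨n * Nat.gcdB a b, by ring⟩ ⟨a * (n * c / b), by ring⟩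
    obtain ⟨k, hk⟩ := hdvd
    have hn : n = a * a₁ + b * k := by linarith
    have hkneg : k < 0 := by
      by_contra h
      push_neg at h
      exact hnr ⟨a₁.toNat, k.toNat, by
        rw [Int.toNat_of_nonneg ha₁0, Int.toNat_of_nonneg h]; exact hn⟩
    have hklb : -a < k := by
      nlinarith [ha₁lt, hn0]
    refine ⟨a₁, k + a, ha₁0, by linarith, by linarith, by linarith, by linarith⟩
  · intro a₁ b₁ h1 h2 h3 h4 hpos
    rintro ⟨x, y, hxy⟩
    have hx : (0:ℤ) ≤ x := Int.ofNat_nonneg x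
    have hy : (0:ℤ) ≤ y := Int.ofNat_nonneg y
    have key : (a:ℤ) * (a₁ - x) = b * (y + a - b₁) := by linarith
    have hdvd : (b:ℤ) ∣ (a₁ - x) := by
      have hcop : IsCoprime (b:ℤ) (a:ℤ) := by
        rw [Int.isCoprime_iff_gcd_eq_one, Int.gcd_natCast_natCast, Nat.gcd_comm, hab]
      exact hcop.dvd_of_dvd_mul_left ⟨y + a - b₁, key⟩
    obtain ⟨t, ht⟩ := hdvd
    have ht0 : t ≤ 0 := by nlinarith
    have hyeq : (y:ℤ) = a * (t - 1) + b₁ := by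
      have : (a:ℤ) * (b * t) = b * (y + a - b₁) := by rw [← ht]; exact key
      have h5 : (b:ℤ) * (a * t) = b * (y + a - b₁) := by linarith
      have := mul_left_cancel₀ (ne_of_gt hbZ) h5
      linarith
    nlinarith
end
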